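/- arXiv:2505.04458 — 9 statements merged into one kernel-verified Lean document; each statement's English description precedes it below -/
import Mathlib

section
/- For n ≥ 3 and 0 < R < √((n-2)/n), the function f_R(r) = 1 - r² - 2Rⁿ/((n-2)r^(n-2)) defined for r > 0 has exactly two positive zeros r₁ < r₂, with r₁ < R < r₂. -/
open Set

/-- For `n ≥ 3` and `0 < R < √((n-2)/n)`, the function
`f_R(r) = 1 - r² - 2Rⁿ/((n-2) r^(n-2))` has exactly two positive zeros
`r₁ < r₂`, with `r₁ < R < r₂`. -/
theorem serrin_ring_two_zeros (n : ℕ) (hn : 3 ≤ n) (R : ℝ)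
    (hR0 : 0 < R) (hRmax : R < Real.sqrt (((n : ℝ) - 2) / n)) :
    ∃ r₁ r₂ : ℝ, 0 < r₁ ∧ r₁ < R ∧ R < r₂ ∧
      (1 - r₁ ^ 2 - 2 * R ^ n / (((n : ℝ) - 2) * r₁ ^ (n - 2)) = 0) ∧
      (1 - r₂ ^ 2 - 2 * R ^ n / (((n : ℝ) - 2) * r₂ ^ (n - 2)) = 0) ∧
      (∀ r : ℝ, 0 < r →
        1 - r ^ 2 - 2 * R ^ n / (((n : ℝ) - 2) * r ^ (n - 2)) = 0 →
        r = r₁ ∨ r = r₂) := by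
  obtain ⟨m, rfl⟩ : ∃ m, n = m + 3 := ⟨n - 3, by omega⟩
  clear hn
  have hsub : m + 3 - 2 = m + 1 := by omega
  have hcast : (((m + 3 : ℕ)) : ℝ) - 2 = (m : ℝ) + 1 := by push_cast; ring
  simp only [hsub, hcast] at hRmax ⊢
  set K : ℝ := ((m : ℝ) + 1) / ((m : ℝ) + 3) with hK
  have hargK : (((m + 3 : ℕ)) : ℝ) - 2 = (m : ℝ) + 1 := hcast
  have hRmax' : R < Real.sqrt K := by
    convert hRmax using 3
    push_cast; ring
  have hm1 : (0:ℝ) < (m : ℝ) + 1 := by positivity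
  have hm3 : (0:ℝ) < (m : ℝ) + 3 := by positivity
  have hKpos : 0 < K := by positivity
  have hK1 : K < 1 := by rw [hK, div_lt_one hm3]; linarith
  set c : ℝ := 2 * R ^ (m + 3) / ((m : ℝ) + 1) with hc
  have hcpos : 0 < c := by positivity
  set g : ℝ → ℝ := fun r => r ^ (m + 1) - r ^ (m + 3) - c with hg
  set s : ℝ := Real.sqrt K with hs
  have hspos : 0 < s := Real.sqrt_pos.mpr hKpos
  have hs1 : s < 1 := by
    rw [hs, show (1:ℝ) = Real.sqrt 1 by simp]
    exact Real.sqrt_lt_sqrt hKpos.le hK1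
  have hR2 : R ^ 2 < K := (Real.lt_sqrt hR0.le).mp hRmax'
  have hRs : R < s := hRmax'
  -- equivalence between f and g zeros
  have hfg : ∀ r : ℝ, 0 < r →
      ((1 - r ^ 2 - 2 * R ^ (m + 3) / (((m:ℝ) + 1) * r ^ (m + 1)) = 0) ↔ g r = 0) := by
    intro r hr
    have hrne : r ≠ 0 := hr.ne'
    have key : r ^ (m+1) * (2 * R ^ (m+3) / (((m:ℝ)+1) * r ^ (m+1))) = c := by
      rw [hc, div_mul_eq_div_div, mul_comm, div_mul_cancel₀ _ (pow_ne_zero _ hrne)]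
    have hgr : g r = r ^ (m + 1) * (1 - r ^ 2 - 2 * R ^ (m + 3) / (((m:ℝ) + 1) * r ^ (m + 1))) := by
      rw [hg]
      simp only
      rw [mul_sub, mul_sub, key, mul_one, ← pow_add]
    constructor
    · intro h; rw [hgr, h, mul_zero]
    · intro h
      rw [hgr, mul_eq_zero] at h
      rcases h with h | h
      · exact absurd h (pow_ne_zero _ hrne)
      · exact h
  -- derivative of g
  have hderiv : ∀ r : ℝ, deriv g r = ((m:ℝ) + 1) * r ^ m - ((m:ℝ) + 3) * r ^ (m + 2) := by
    intro r
    have h : HasDerivAt g ((↑(m+1):ℝ) * r ^ (m + 1 - 1) - (↑(m+3):ℝ) * r ^ (m + 3 - 1)) r :=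
      ((hasDerivAt_pow (m+1) r).sub (hasDerivAt_pow (m+3) r)).sub_const c
    rw [h.deriv]
    push_cast
    norm_num
  have hcont : Continuous g := by
    exact ((continuous_pow (m+1)).sub (continuous_pow (m+3))).sub continuous_const
  -- strict mono on [0, s]
  have hmono : StrictMonoOn g (Icc 0 s) := by
    apply strictMonoOn_of_deriv_pos (convex_Icc 0 s) hcont.continuousOn
    intro r hr
    rw [interior_Icc] at hr
    have hr2 : r ^ 2 < K := (Real.lt_sqrt hr.1.le).mp hr.2
    have h1 : ((m:ℝ) + 3) * r ^ 2 < (m : ℝ) + 1 := by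
      rw [hK, lt_div_iff₀ hm3] at hr2; linarith
    rw [hderiv, show ((m:ℝ) + 1) * r ^ m - ((m:ℝ) + 3) * r ^ (m + 2)
        = r ^ m * (((m:ℝ) + 1) - ((m:ℝ) + 3) * r ^ 2) by ring]
    exact mul_pos (pow_pos hr.1 m) (by linarith)
  -- strict anti on [s, ∞)
  have hanti : StrictAntiOn g (Ici s) := by
    apply strictAntiOn_of_deriv_neg (convex_Ici s) hcont.continuousOn
    intro r hr
    rw [interior_Ici] at hr
    have hrpos : 0 < r := hspos.trans hr
    have hr2 : K < r ^ 2 := (Real.sqrt_lt' hrpos).mp hr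
    have h1 : (m : ℝ) + 1 < ((m:ℝ) + 3) * r ^ 2 := by
      rw [hK, div_lt_iff₀ hm3] at hr2; linarith
    rw [hderiv, show ((m:ℝ) + 1) * r ^ m - ((m:ℝ) + 3) * r ^ (m + 2)
        = r ^ m * (((m:ℝ) + 1) - ((m:ℝ) + 3) * r ^ 2) by ring]
    exact mul_neg_of_pos_of_neg (pow_pos hrpos m) (by linarith)
  -- values
  have hg0 : g 0 = -c := by rw [hg]; simp
  have hg1 : g 1 = -c := by rw [hg]; simp
  have hgR : 0 < g R := by
    have hgRe : g R = R ^ (m + 1) * (((m:ℝ) + 1) - ((m:ℝ) + 3) * R ^ 2) / ((m:ℝ) + 1) := by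
      rw [hg, hc]; field_simp [hm1.ne', show ((1:ℝ)+m) ≠ 0 by positivity]; ring
    have h1 : ((m:ℝ) + 3) * R ^ 2 < (m : ℝ) + 1 := by
      rw [hK, lt_div_iff₀ hm3] at hR2; linarith
    rw [hgRe]
    exact div_pos (mul_pos (pow_pos hR0 _) (by linarith)) hm1
  have hR1 : R < 1 := hRs.trans hs1
  -- existence of r₁
  obtain ⟨r₁, hr₁mem, hgr₁⟩ : ∃ r₁ ∈ Ioo (0:ℝ) R, g r₁ = 0 := by
    have := intermediate_value_Ioo hR0.le hcont.continuousOn (a := 0) (b := R)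
    have h0 : (0:ℝ) ∈ Ioo (g 0) (g R) := by rw [hg0]; exact ⟨by linarith, hgR⟩
    obtain ⟨x, hx, hgx⟩ := this h0
    exact ⟨x, hx, hgx⟩
  obtain ⟨r₂, hr₂mem, hgr₂⟩ : ∃ r₂ ∈ Ioo R (1:ℝ), g r₂ = 0 := by
    have := intermediate_value_Ioo' hR1.le hcont.continuousOn (a := R) (b := 1)
    have h0 : (0:ℝ) ∈ Ioo (g 1) (g R) := by rw [hg1]; exact ⟨by linarith, hgR⟩
    obtain ⟨x, hx, hgx⟩ := this h0
    exact ⟨x, hx, hgx⟩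
  -- r₂ > s
  have hr₂s : s < r₂ := by
    by_contra h
    push_neg at h
    have : g R < g r₂ := hmono ⟨hR0.le, hRs.le⟩ ⟨(hR0.trans hr₂mem.1).le, h⟩ hr₂mem.1
    rw [hgr₂] at this; linarith
  refine ⟨r₁, r₂, hr₁mem.1, hr₁mem.2, hr₂mem.1, ?_, ?_, ?_⟩
  · exact (hfg r₁ hr₁mem.1).mpr hgr₁
  · exact (hfg r₂ (hR0.trans hr₂mem.1)).mpr hgr₂
  · intro r hr hfr
    have hgr : g r = 0 := (hfg r hr).mp hfr
    rcases le_or_gt r s with hle | hlt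
    · left
      exact hmono.injOn ⟨hr.le, hle⟩ ⟨hr₁mem.1.le, (hr₁mem.2.trans hRs).le⟩ (by rw [hgr, hgr₁])
    · right
      exact hanti.injOn (mem_Ici.mpr hlt.le) (mem_Ici.mpr hr₂s.le) (by rw [hgr, hgr₂])
end

section
/- For n ≥ 3 and 0 < R < √((n-2)/n), the function u_R(x) = (1-|x|²)/2 - Rⁿ/((n-2)|x|^(n-2)) satisfies Δu_R = -n on the annulus Ω_R = {x ∈ ℝⁿ : r₁ < |x| < r₂}, vanishes on ∂Ω_R, and is positive in Ω_R. -/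
/-!
`u_R = f_R / 2` with `f_R(r) = 1 - r² - K r^(2-n)`, `K ≥ 0`. Writing `u_R(x) = g(‖x‖²)` with
`g(t) = (1 - t)/2 - c t^(1 - n/2)`, the Laplacian of a radial function is
`2n g'(t) + 4t g''(t)`, and the `t^(1 - n/2)` term is harmonic, so `Δu_R = -n`. The profile
`f_R` is strictly concave on `(0, ∞)` (sum of `-r²` and `-K r^(2-n)`), so it is positive strictly
between its two zeros `r₁` and `r₂`.
-/

open Set

noncomputable section

/-- The Euclidean Laplacian: sum of the pure second partial derivatives. -/
def lap {n : ℕ} (u : EuclideanSpace ℝ (Fin n) → ℝ) (x : EuclideanSpace ℝ (Fin n)) : ℝ :=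
  ∑ i, iteratedFDeriv ℝ 2 u x ![EuclideanSpace.single i 1, EuclideanSpace.single i 1]

open Filter Topology InnerProductSpace Laplacian
open scoped RealInnerProductSpace

theorem lap_eq_laplacian {n : ℕ} (u : EuclideanSpace ℝ (Fin n) → ℝ) : lap u = Δ u := by
  rw [laplacian_eq_iteratedFDeriv_orthonormalBasis u (EuclideanSpace.basisFun (Fin n) ℝ)]
  ext x
  simp [lap]

section Radial

variable {E : Type*} [NormedAddCommGroup E] [InnerProductSpace ℝ E]
  {g g' : ℝ → ℝ} {g'' : ℝ} {x : E}

theorem iteratedFDeriv_two_comp_norm_sq_apply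
    (hg : ∀ᶠ t in 𝓝 (‖x‖ ^ 2), HasDerivAt g (g' t) t) (hg' : HasDerivAt g' g'' (‖x‖ ^ 2))
    (v : E) :
    iteratedFDeriv ℝ 2 (fun y => g (‖y‖ ^ 2)) x ![v, v]
      = 2 * g' (‖x‖ ^ 2) * ‖v‖ ^ 2 + 4 * g'' * ⟪x, v⟫ ^ 2 := by
  have hnormSq : ∀ y : E, HasFDerivAt (fun y : E => ‖y‖ ^ 2) (2 • innerSL ℝ y) y :=
    fun y => (hasStrictFDerivAt_norm_sq y).hasFDerivAt
  have hfderiv : fderiv ℝ (fun y => g (‖y‖ ^ 2)) =ᶠ[𝓝 x]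
      fun y => g' (‖y‖ ^ 2) • (2 • innerSL ℝ y) := by
    filter_upwards [((continuous_norm.pow 2).tendsto x).eventually hg] with y hy
    exact (hy.comp_hasFDerivAt y (hnormSq y)).fderiv
  have hsecond : HasFDerivAt (fun y => g' (‖y‖ ^ 2) • (2 • innerSL ℝ y))
      (g' (‖x‖ ^ 2) • (2 • innerSL ℝ (E := E))
        + (g'' • (2 • innerSL ℝ x)).smulRight (2 • innerSL ℝ x)) x :=
    (hg'.comp_hasFDerivAt x (hnormSq x)).smul (2 • innerSL ℝ (E := E)).hasFDerivAt
  rw [iteratedFDeriv_two_apply, hfderiv.fderiv_eq, hsecond.fderiv]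
  simp only [Matrix.cons_val_zero, Matrix.cons_val_one, Matrix.cons_val_fin_one, add_apply,
    smul_apply, ContinuousLinearMap.smulRight_apply, coe_innerSL_apply, nsmul_eq_mul,
    Nat.cast_ofNat, smul_eq_mul]
  rw [innerSL_apply_apply, real_inner_self_eq_norm_sq]
  ring

theorem laplacian_comp_norm_sq [FiniteDimensional ℝ E]
    (hg : ∀ᶠ t in 𝓝 (‖x‖ ^ 2), HasDerivAt g (g' t) t) (hg' : HasDerivAt g' g'' (‖x‖ ^ 2)) :
    Δ (fun y : E => g (‖y‖ ^ 2)) x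
      = 2 * Module.finrank ℝ E * g' (‖x‖ ^ 2) + 4 * ‖x‖ ^ 2 * g'' := by
  let b := stdOrthonormalBasis ℝ E
  rw [laplacian_eq_iteratedFDeriv_orthonormalBasis _ b]
  simp only [iteratedFDeriv_two_comp_norm_sq_apply hg hg', b.norm_eq_one, one_pow,
    Finset.sum_add_distrib, ← Finset.mul_sum, b.sum_sq_inner_left, Finset.sum_const,
    Finset.card_univ, Fintype.card_fin, nsmul_eq_mul]
  ring

theorem laplacian_one_sub_norm_sq_div_two_sub_mul_rpow [FiniteDimensional ℝ E] (c : ℝ)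
    (hx : x ≠ 0) :
    Δ (fun y : E => (1 - ‖y‖ ^ 2) / 2 - c * (‖y‖ ^ 2) ^ (1 - (Module.finrank ℝ E : ℝ) / 2) :
        E → ℝ) x
      = -(Module.finrank ℝ E : ℝ) := by
  set d : ℝ := (Module.finrank ℝ E : ℝ)
  have hs : 0 < ‖x‖ ^ 2 := by positivity
  have hg : ∀ t ≠ 0, HasDerivAt (fun t : ℝ => (1 - t) / 2 - c * t ^ (1 - d / 2))
      (-(1 / 2) - c * ((1 - d / 2) * t ^ (-(d / 2)))) t := by
    intro t ht
    have := Real.hasDerivAt_rpow_const (p := 1 - d / 2) (Or.inl ht)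
    refine ((((hasDerivAt_id t).const_sub 1).div_const 2).sub (this.const_mul c)).congr_deriv ?_
    rw [sub_sub_cancel_left]
    ring
  have hg' : HasDerivAt (fun t : ℝ => -(1 / 2) - c * ((1 - d / 2) * t ^ (-(d / 2))))
      (-(c * ((1 - d / 2) * (-(d / 2) * (‖x‖ ^ 2) ^ (-(d / 2) - 1))))) (‖x‖ ^ 2) :=
    (((Real.hasDerivAt_rpow_const (Or.inl hs.ne')).const_mul _).const_mul c).const_sub _
  rw [laplacian_comp_norm_sq ((eventually_ne_nhds hs.ne').mono hg) hg']
  have hpow : ‖x‖ ^ 2 * (‖x‖ ^ 2) ^ (-(d / 2) - 1) = (‖x‖ ^ 2) ^ (-(d / 2)) := by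
    rw [Real.rpow_sub_one hs.ne']; field_simp
  linear_combination (2 * c * d * (1 - d / 2)) * hpow

end Radial

theorem sq_rpow_one_sub_div_two {n : ℕ} (hn : 2 ≤ n) {a : ℝ} (ha : 0 < a) :
    (a ^ 2) ^ (1 - (n : ℝ) / 2) = (a ^ (n - 2))⁻¹ := by
  rw [← Real.rpow_natCast a 2, ← Real.rpow_mul ha.le, ← Real.rpow_natCast a (n - 2),
    ← Real.rpow_neg ha.le, Nat.cast_sub hn]
  congr 1
  push_cast
  ring

theorem lap_one_sub_norm_sq_div_two_sub_div_norm_pow {n : ℕ} (hn : 2 ≤ n) (c : ℝ)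
    {x : EuclideanSpace ℝ (Fin n)} (hx : x ≠ 0) :
    lap (fun y : EuclideanSpace ℝ (Fin n) =>
      (1 - ‖y‖ ^ 2) / 2 - c / (((n : ℝ) - 2) * ‖y‖ ^ (n - 2))) x = -n := by
  have hmodel : (fun y : EuclideanSpace ℝ (Fin n) =>
      (1 - ‖y‖ ^ 2) / 2 - c / (((n : ℝ) - 2) * ‖y‖ ^ (n - 2))) =ᶠ[𝓝 x]
      fun y => (1 - ‖y‖ ^ 2) / 2 - c / ((n : ℝ) - 2) *
        (‖y‖ ^ 2) ^ (1 - (Module.finrank ℝ (EuclideanSpace ℝ (Fin n)) : ℝ) / 2) := by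
    filter_upwards [eventually_ne_nhds hx] with y hy
    rw [finrank_euclideanSpace_fin, sq_rpow_one_sub_div_two hn (norm_pos_iff.2 hy), ← div_div]
    ring
  rw [lap_eq_laplacian, (laplacian_congr_nhds hmodel).eq_of_nhds,
    laplacian_one_sub_norm_sq_div_two_sub_mul_rpow _ hx, finrank_euclideanSpace_fin]

theorem strictConcaveOn_one_sub_sq_sub_div_pow {K : ℝ} (hK : 0 ≤ K) (m : ℕ) :
    StrictConcaveOn ℝ (Ioi 0) fun r : ℝ => 1 - r ^ 2 - K / r ^ m := by
  have hsq : StrictConvexOn ℝ (Ioi 0) fun r : ℝ => r ^ 2 :=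
    (strictConvexOn_pow le_rfl).subset Ioi_subset_Ici_self (convex_Ioi 0)
  have hinv : ConvexOn ℝ (Ioi 0) fun r : ℝ => K / r ^ m := by
    refine ((convexOn_zpow (-m : ℤ)).smul hK).congr fun r _ => ?_
    simp [div_eq_mul_inv]
  exact ((concaveOn_const 1 (convex_Ioi 0)).sub_strictConvexOn hsq).sub_convexOn hinv

theorem StrictConcaveOn.pos_of_mem_Ioo {s : Set ℝ} {f : ℝ → ℝ} (hf : StrictConcaveOn ℝ s f)
    {a b x : ℝ} (ha : a ∈ s) (hb : b ∈ s) (hfa : 0 ≤ f a) (hfb : 0 ≤ f b) (hx : x ∈ Ioo a b) :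
    0 < f x := by
  have hab : a < b := hx.1.trans hx.2
  calc 0 ≤ min (f a) (f b) := le_min hfa hfb
    _ < f x := hf.lt_on_openSegment ha hb hab.ne (by rwa [openSegment_eq_Ioo hab])

theorem serrin_ring_model_solution_general (n : ℕ) (hn : 3 ≤ n) (R : ℝ)
    (hR0 : 0 < R) (r₁ r₂ : ℝ) (hr₁0 : 0 < r₁)
    (hz₁ : 1 - r₁ ^ 2 - 2 * R ^ n / (((n : ℝ) - 2) * r₁ ^ (n - 2)) = 0)
    (hz₂ : 1 - r₂ ^ 2 - 2 * R ^ n / (((n : ℝ) - 2) * r₂ ^ (n - 2)) = 0) :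
    (∀ x : EuclideanSpace ℝ (Fin n), r₁ < ‖x‖ → ‖x‖ < r₂ →
      lap (fun y : EuclideanSpace ℝ (Fin n) =>
        (1 - ‖y‖ ^ 2) / 2 - R ^ n / (((n : ℝ) - 2) * ‖y‖ ^ (n - 2))) x = -n) ∧
    (∀ x : EuclideanSpace ℝ (Fin n), ‖x‖ = r₁ ∨ ‖x‖ = r₂ →
      (1 - ‖x‖ ^ 2) / 2 - R ^ n / (((n : ℝ) - 2) * ‖x‖ ^ (n - 2)) = 0) ∧
    (∀ x : EuclideanSpace ℝ (Fin n), r₁ < ‖x‖ → ‖x‖ < r₂ →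
      0 < (1 - ‖x‖ ^ 2) / 2 - R ^ n / (((n : ℝ) - 2) * ‖x‖ ^ (n - 2))) := by
  have hK : 0 ≤ 2 * R ^ n / ((n : ℝ) - 2) :=
    div_nonneg (by positivity) (sub_nonneg.2 (Nat.ofNat_le_cast.2 (by omega)))
  rw [← div_div] at hz₁ hz₂
  have hu : ∀ r : ℝ, (1 - r ^ 2) / 2 - R ^ n / (((n : ℝ) - 2) * r ^ (n - 2))
      = (1 - r ^ 2 - 2 * R ^ n / ((n : ℝ) - 2) / r ^ (n - 2)) / 2 :=
    fun r => by rw [← div_div]; ring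
  refine ⟨fun x hx₁ _ => lap_one_sub_norm_sq_div_two_sub_div_norm_pow (by omega) _
    (norm_pos_iff.mp (hr₁0.trans hx₁)), ?_, fun x hx₁ hx₂ => ?_⟩
  · rintro x (hx | hx)
    · rw [hu, hx, hz₁, zero_div]
    · rw [hu, hx, hz₂, zero_div]
  · rw [hu]
    exact half_pos ((strictConcaveOn_one_sub_sq_sub_div_pow hK (n - 2)).pos_of_mem_Ioo
      hr₁0 (hr₁0.trans (hx₁.trans hx₂)) hz₁.ge hz₂.ge ⟨hx₁, hx₂⟩)

/-- the model function
`u_R(x) = (1-|x|²)/2 - Rⁿ/((n-2)|x|^(n-2))` satisfies `Δu_R = -n` on the annulus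
`Ω_R = {r₁ < |x| < r₂}`, vanishes on its boundary (the two spheres), and is
positive inside. -/
theorem serrin_ring_model_solution (n : ℕ) (hn : 3 ≤ n) (R : ℝ)
    (hR0 : 0 < R) (hRmax : R < Real.sqrt (((n : ℝ) - 2) / n))
    (r₁ r₂ : ℝ) (hr₁0 : 0 < r₁) (hr₁R : r₁ < R) (hRr₂ : R < r₂)
    (hz₁ : 1 - r₁ ^ 2 - 2 * R ^ n / (((n : ℝ) - 2) * r₁ ^ (n - 2)) = 0)
    (hz₂ : 1 - r₂ ^ 2 - 2 * R ^ n / (((n : ℝ) - 2) * r₂ ^ (n - 2)) = 0) :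
    (∀ x : EuclideanSpace ℝ (Fin n), r₁ < ‖x‖ → ‖x‖ < r₂ →
      lap (fun y : EuclideanSpace ℝ (Fin n) =>
        (1 - ‖y‖ ^ 2) / 2 - R ^ n / (((n : ℝ) - 2) * ‖y‖ ^ (n - 2))) x = -n) ∧
    (∀ x : EuclideanSpace ℝ (Fin n), ‖x‖ = r₁ ∨ ‖x‖ = r₂ →
      (1 - ‖x‖ ^ 2) / 2 - R ^ n / (((n : ℝ) - 2) * ‖x‖ ^ (n - 2)) = 0) ∧
    (∀ x : EuclideanSpace ℝ (Fin n), r₁ < ‖x‖ → ‖x‖ < r₂ →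
      0 < (1 - ‖x‖ ^ 2) / 2 - R ^ n / (((n : ℝ) - 2) * ‖x‖ ^ (n - 2))) :=
  serrin_ring_model_solution_general n hn R hR0 r₁ r₂ hr₁0 hz₁ hz₂
end
end

section
/- The Outer Normalized Wall Shear Stress τ₂(R) = r₂(R)·(1 - Rⁿ/r₂(R)ⁿ)/√(1 - nR²/(n-2)) is a strictly increasing continuous function of R on (0, √((n-2)/n)), with τ₂(R) → 1 as R → 0⁺ and τ₂(R) → √n as R → √((n-2)/n)⁻. -/
/-!
Put `q = R / r₂(R) ∈ (0, 1)`. The equation for `r₂` says `r₂² ((n - 2) + 2qⁿ) = n - 2`, hence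
`R² = (n - 2) q² / ((n - 2) + 2qⁿ)`, a strictly increasing function of `q ∈ [0, 1]` that takes the
value `(n - 2) / n` at `q = 1`. So `q` is a strictly increasing function of `R`, tending to `0`
and `1` at the two ends of the interval, and continuous because a strictly monotone map on an
interval reflects convergence. In terms of `q`, `τ₂² = (n - 2)(1 - qⁿ)² / ((n - 2) + 2qⁿ - nq²)`,
whose derivative has the sign of a polynomial decreasing to `0` at `q = 1`. Numerator and
denominator have a double zero at `q = 1`; cancelling `(1 - q)²` extends `τ₂²` continuously to
`[0, 1]`, with the values `1` at `q = 0` and `n` at `q = 1`.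
-/

open Set Filter Topology

theorem StrictMonoOn.tendsto_of_tendsto_comp {α β γ : Type*} [LinearOrder α] [TopologicalSpace α]
    [OrderTopology α] [DenselyOrdered α] [LinearOrder β] [TopologicalSpace β] [OrderTopology β]
    {f : α → β} {s : Set α} (hf : StrictMonoOn f s) (hs : s.OrdConnected)
    {g : γ → α} {l : Filter γ} {a : α} (ha : a ∈ s) (hgs : ∀ᶠ x in l, g x ∈ s)
    (hfg : Tendsto (f ∘ g) l (𝓝 (f a))) : Tendsto g l (𝓝 a) := by
  rw [tendsto_order] at hfg ⊢
  constructor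
  · intro b hb
    obtain ⟨z, hbz, hza⟩ := exists_between hb
    by_cases hz : z ∈ s
    · filter_upwards [hgs, hfg.1 _ (hf hz ha hza)] with x hx hfx
      exact hbz.trans ((hf.lt_iff_lt hz hx).1 hfx)
    · filter_upwards [hgs] with x hx
      exact hbz.trans (not_le.1 fun hxz => hz (hs.out hx ha ⟨hxz, hza.le⟩))
  · intro b hb
    obtain ⟨z, haz, hzb⟩ := exists_between hb
    by_cases hz : z ∈ s
    · filter_upwards [hgs, hfg.2 _ (hf ha hz haz)] with x hx hfx
      exact ((hf.lt_iff_lt hx hz).1 hfx).trans hzb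
    · filter_upwards [hgs] with x hx
      exact (not_le.1 fun hzx => hz (hs.out ha hx ⟨haz.le, hzx⟩)).trans hzb

section Polynomials

open Finset

theorem one_sub_mul_sum_range_sub_mul_pow {A : Type*} [CommRing A] (q : A) (p : ℕ) :
    (1 - q) * ∑ k ∈ range p, ((p : A) - k) * q ^ k = (p + 1) - ∑ k ∈ range (p + 1), q ^ k := by
  induction p with
  | zero => simp
  | succ p ih =>
    have hsplit : ∑ k ∈ range (p + 1), ((↑(p + 1) : A) - k) * q ^ k
        = ∑ k ∈ range p, ((p : A) - k) * q ^ k + ∑ k ∈ range (p + 1), q ^ k := by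
      rw [sum_range_succ, sum_range_succ, ← add_assoc, ← sum_add_distrib]
      push_cast
      congr 1
      · exact sum_congr rfl fun k _ => by ring
      · ring
    rw [hsplit, mul_add, ih, mul_neg_geom_sum, sum_range_succ _ (p + 1)]
    push_cast
    ring

/-! Throughout, the dimension is `n = m + 3`, so that `n - 2 = m + 1` involves no truncated
subtraction, and `q` stands for the ratio `R / r₂(R)`. -/

noncomputable def radiusSq (m : ℕ) (q : ℝ) : ℝ :=
  ((m : ℝ) + 1) * q ^ 2 / ((m : ℝ) + 1 + 2 * q ^ (m + 3))

noncomputable def nwssDenom (m : ℕ) (q : ℝ) : ℝ :=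
  (m : ℝ) + 1 + 2 * q ^ (m + 3) - ((m : ℝ) + 3) * q ^ 2

noncomputable def nwssDenomRed (m : ℕ) (q : ℝ) : ℝ :=
  2 * ∑ k ∈ range (m + 2), ((m : ℝ) + 2 - k) * q ^ k - ((m : ℝ) + 3)

noncomputable def nwssSq (m : ℕ) (q : ℝ) : ℝ :=
  ((m : ℝ) + 1) * (1 - q ^ (m + 3)) ^ 2 / nwssDenom m q

noncomputable def nwssSqRed (m : ℕ) (q : ℝ) : ℝ :=
  ((m : ℝ) + 1) * (∑ k ∈ range (m + 3), q ^ k) ^ 2 / nwssDenomRed m q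

theorem one_sub_sq_mul_nwssDenomRed (m : ℕ) (q : ℝ) :
    (1 - q) ^ 2 * nwssDenomRed m q = nwssDenom m q := by
  have h := one_sub_mul_sum_range_sub_mul_pow q (m + 2)
  push_cast at h
  rw [nwssDenomRed, nwssDenom]
  linear_combination 2 * (1 - q) * h - 2 * mul_neg_geom_sum q (m + 3)

theorem nwssDenomRed_pos (m : ℕ) {q : ℝ} (hq : 0 ≤ q) : 0 < nwssDenomRed m q := by
  have hterm : (m : ℝ) + 2 ≤ ∑ k ∈ range (m + 2), ((m : ℝ) + 2 - k) * q ^ k := by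
    refine le_of_eq_of_le (by simp) (single_le_sum (fun k hk => ?_) (mem_range.2 (by omega :
      0 < m + 2)))
    have hk : (k : ℝ) < m + 2 := by exact_mod_cast mem_range.1 hk
    exact mul_nonneg (by linarith) (pow_nonneg hq k)
  rw [nwssDenomRed]
  linarith

theorem nwssDenom_pos (m : ℕ) {q : ℝ} (hq0 : 0 ≤ q) (hq1 : q < 1) : 0 < nwssDenom m q := by
  rw [← one_sub_sq_mul_nwssDenomRed]
  exact mul_pos (by nlinarith) (nwssDenomRed_pos m hq0)

theorem nwssDenomRed_one (m : ℕ) : nwssDenomRed m 1 = ((m : ℝ) + 1) * ((m : ℝ) + 3) := by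
  have hgauss : ∑ k ∈ range (m + 2), (k : ℝ) = (m + 2) * (m + 1) / 2 := by
    rw [eq_div_iff two_ne_zero]
    have h := sum_range_id_mul_two (m + 2)
    rw [show m + 2 - 1 = m + 1 by omega] at h
    rw [← Nat.cast_sum]
    exact_mod_cast h
  simp only [nwssDenomRed, one_pow, mul_one, sum_sub_distrib, sum_const, card_range,
    nsmul_eq_mul, hgauss]
  push_cast
  ring

theorem nwssSq_eq_nwssSqRed (m : ℕ) {q : ℝ} (hq : q ≠ 1) : nwssSq m q = nwssSqRed m q := by
  have h1q : (1 - q) ^ 2 ≠ 0 := pow_ne_zero 2 (sub_ne_zero.2 hq.symm)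
  rw [nwssSq, nwssSqRed, ← one_sub_sq_mul_nwssDenomRed, ← mul_neg_geom_sum, mul_pow,
    mul_left_comm, mul_div_mul_left _ _ h1q]

theorem nwssSqRed_zero (m : ℕ) : nwssSqRed m 0 = 1 := by
  have h : 2 * ((m : ℝ) + 2) - (m + 3) = m + 1 := by ring
  simp [nwssSqRed, nwssDenomRed, sum_range_succ', h, Nat.cast_add_one_ne_zero]

theorem nwssSqRed_one (m : ℕ) : nwssSqRed m 1 = m + 3 := by
  have h : ((m : ℝ) + 1) * ((m : ℝ) + 3) ≠ 0 := by positivity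
  rw [nwssSqRed, nwssDenomRed_one]
  simp only [one_pow, sum_const, card_range, nsmul_eq_mul, mul_one]
  push_cast
  field_simp

end Polynomials

theorem nwssSqRed_nonneg (m : ℕ) {q : ℝ} (hq : 0 ≤ q) : 0 ≤ nwssSqRed m q :=
  div_nonneg (by positivity) (nwssDenomRed_pos m hq).le

theorem continuousOn_nwssSqRed (m : ℕ) : ContinuousOn (nwssSqRed m) (Ici 0) :=
  ContinuousOn.div (by fun_prop) (by unfold nwssDenomRed; fun_prop)
    fun _ hq => (nwssDenomRed_pos m hq).ne'

theorem radiusSq_strictMonoOn (m : ℕ) : StrictMonoOn (radiusSq m) (Icc 0 1) := by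
  have hD : ∀ q : ℝ, 0 ≤ q → 0 < (m : ℝ) + 1 + 2 * q ^ (m + 3) := fun q hq => by positivity
  refine strictMonoOn_of_hasDerivWithinAt_pos (convex_Icc 0 1)
    (f' := fun q => 2 * ((m : ℝ) + 1) ^ 2 * q * (1 - q ^ (m + 3)) /
      ((m : ℝ) + 1 + 2 * q ^ (m + 3)) ^ 2)
    (ContinuousOn.div (by fun_prop) (by fun_prop) fun q hq => (hD q hq.1).ne') ?_ ?_
  all_goals intro q hq; rw [interior_Icc] at hq
  · have h := ((hasDerivAt_pow 2 q).const_mul ((m : ℝ) + 1)).div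
      (((hasDerivAt_pow (m + 3) q).const_mul 2).const_add ((m : ℝ) + 1)) (hD q hq.1.le).ne'
    refine (h.congr_deriv ?_).hasDerivWithinAt
    simp only [Nat.reduceSubDiff, Nat.cast_add, Nat.cast_ofNat]
    ring
  · have hqn : q ^ (m + 3) < 1 := pow_lt_one₀ hq.1.le hq.2 (by omega)
    have hq0 := hq.1
    have hDq := hD q hq.1.le
    positivity

-- Up to positive factors, the numerator of the derivative of `nwssSq`.
theorem one_add_mul_pow_sub_mul_pow_sub_pow_pos (m : ℕ) {q : ℝ} (hq0 : 0 ≤ q) (hq1 : q < 1) :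
    0 < 1 + ((m : ℝ) + 2) * q ^ (m + 3) - ((m : ℝ) + 2) * q ^ (m + 1) - q ^ (2 * m + 4) := by
  have hanti : StrictAntiOn (fun q : ℝ =>
      1 + ((m : ℝ) + 2) * q ^ (m + 3) - ((m : ℝ) + 2) * q ^ (m + 1) - q ^ (2 * m + 4))
      (Icc 0 1) := by
    refine strictAntiOn_of_hasDerivWithinAt_neg (convex_Icc 0 1)
      (f' := fun q => -((m : ℝ) + 2) * q ^ m * nwssDenom m q) (by fun_prop) ?_ ?_
    all_goals intro q hq; rw [interior_Icc] at hq
    · have h := ((((hasDerivAt_pow (m + 3) q).const_mul ((m : ℝ) + 2)).const_add 1).sub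
        ((hasDerivAt_pow (m + 1) q).const_mul ((m : ℝ) + 2))).sub (hasDerivAt_pow (2 * m + 4) q)
      refine (h.congr_deriv ?_).hasDerivWithinAt
      simp only [Nat.reduceSubDiff, Nat.cast_add, Nat.cast_mul, Nat.cast_ofNat, nwssDenom]
      ring
    · have hg := nwssDenom_pos m hq.1.le hq.2
      have hq0 := hq.1
      simp only [neg_mul, neg_lt_zero]
      positivity
  simpa using hanti ⟨hq0, hq1.le⟩ ⟨zero_le_one, le_rfl⟩ hq1

theorem nwssSq_strictMonoOn (m : ℕ) : StrictMonoOn (nwssSq m) (Ico 0 1) := by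
  have hg : ∀ q ∈ Ico (0 : ℝ) 1, nwssDenom m q ≠ 0 := fun q hq => (nwssDenom_pos m hq.1 hq.2).ne'
  refine strictMonoOn_of_hasDerivWithinAt_pos (convex_Ico 0 1)
    (f' := fun q => 2 * ((m : ℝ) + 1) * ((m : ℝ) + 3) * q * (1 - q ^ (m + 3)) *
      (1 + ((m : ℝ) + 2) * q ^ (m + 3) - ((m : ℝ) + 2) * q ^ (m + 1) - q ^ (2 * m + 4)) /
      nwssDenom m q ^ 2)
    (ContinuousOn.div (by fun_prop) (by unfold nwssDenom; fun_prop) hg) ?_ ?_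
  all_goals intro q hq; rw [interior_Ico] at hq
  · have h := (((((hasDerivAt_pow (m + 3) q).const_sub 1).pow 2).const_mul ((m : ℝ) + 1)).div
      ((((hasDerivAt_pow (m + 3) q).const_mul 2).const_add ((m : ℝ) + 1)).sub
        ((hasDerivAt_pow 2 q).const_mul ((m : ℝ) + 3))) (hg q (Ioo_subset_Ico_self hq)))
    refine (h.congr_deriv ?_).hasDerivWithinAt
    simp only [Nat.reduceSubDiff, Pi.sub_apply, Pi.pow_apply, Nat.cast_add, Nat.cast_ofNat,
      nwssDenom]
    ring
  · have hqn : q ^ (m + 3) < 1 := pow_lt_one₀ hq.1.le hq.2 (by omega)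
    have hA := one_add_mul_pow_sub_mul_pow_sub_pow_pos m hq.1.le hq.2
    have hg := nwssDenom_pos m hq.1.le hq.2
    have hq0 := hq.1
    positivity

theorem nwssSqRed_strictMonoOn (m : ℕ) : StrictMonoOn (nwssSqRed m) (Ioo 0 1) :=
  ((nwssSq_strictMonoOn m).mono Ioo_subset_Ico_self).congr fun _ hq =>
    nwssSq_eq_nwssSqRed m hq.2.ne

theorem sq_mul_eq_of_root {m : ℕ} {R s : ℝ} (hs : s ≠ 0)
    (heq : 1 - s ^ 2 - 2 * R ^ (m + 3) / (((m : ℝ) + 1) * s ^ (m + 1)) = 0) :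
    s ^ 2 * ((m : ℝ) + 1 + 2 * (R / s) ^ (m + 3)) = m + 1 := by
  have h1 : 2 * R ^ (m + 3) = (1 - s ^ 2) * (((m : ℝ) + 1) * s ^ (m + 1)) := by
    field_simp at heq
    linarith
  rw [div_pow, show s ^ (m + 3) = s ^ (m + 1) * s ^ 2 by ring]
  field_simp
  linear_combination h1

theorem radiusSq_div_of_root {m : ℕ} {R s : ℝ} (hs : s ≠ 0)
    (heq : 1 - s ^ 2 - 2 * R ^ (m + 3) / (((m : ℝ) + 1) * s ^ (m + 1)) = 0) :
    radiusSq m (R / s) = R ^ 2 := by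
  have hroot := sq_mul_eq_of_root hs heq
  have hD : (m : ℝ) + 1 + 2 * (R / s) ^ (m + 3) ≠ 0 := by
    rintro hD
    rw [hD, mul_zero] at hroot
    linarith [hroot, (m.cast_nonneg : (0 : ℝ) ≤ m)]
  rw [radiusSq, div_eq_iff hD]
  nth_rw 1 [← hroot]
  field_simp

theorem nwss_eq_sqrt_nwssSq_of_root {m : ℕ} {R s : ℝ} (hR : 0 ≤ R) (hRs : R < s)
    (heq : 1 - s ^ 2 - 2 * R ^ (m + 3) / (((m : ℝ) + 1) * s ^ (m + 1)) = 0) :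
    s * (1 - R ^ (m + 3) / s ^ (m + 3)) / √(1 - ((m : ℝ) + 3) * R ^ 2 / ((m : ℝ) + 1)) =
      √(nwssSq m (R / s)) := by
  have hs : 0 < s := hR.trans_lt hRs
  have hq0 : 0 ≤ R / s := div_nonneg hR hs.le
  have hq1 : R / s < 1 := (div_lt_one hs).2 hRs
  have hroot := sq_mul_eq_of_root hs.ne' heq
  have hD : 0 < (m : ℝ) + 1 + 2 * (R / s) ^ (m + 3) := by positivity
  have hG : 1 - ((m : ℝ) + 3) * R ^ 2 / ((m : ℝ) + 1) =
      nwssDenom m (R / s) / ((m : ℝ) + 1 + 2 * (R / s) ^ (m + 3)) := by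
    rw [← radiusSq_div_of_root hs.ne' heq, radiusSq, nwssDenom]
    field_simp
  have hgap := nwssDenom_pos m hq0 hq1
  have hτ : 0 ≤ s * (1 - R ^ (m + 3) / s ^ (m + 3)) := by
    rw [← div_pow]
    exact mul_nonneg hs.le (sub_nonneg.2 (pow_le_one₀ hq0 hq1.le))
  rw [eq_comm, nwssSq, Real.sqrt_eq_iff_eq_sq (div_nonneg (by positivity) hgap.le) (by positivity),
    div_pow (s * _), Real.sq_sqrt (by rw [hG]; positivity), hG, ← div_pow R,
    div_div_eq_mul_div, mul_pow, mul_right_comm, hroot]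

noncomputable def criticalRadius (m : ℕ) : ℝ := √(((m : ℝ) + 1) / ((m : ℝ) + 3))

theorem radiusSq_one (m : ℕ) : radiusSq m 1 = criticalRadius m ^ 2 := by
  rw [criticalRadius, Real.sq_sqrt (by positivity), radiusSq, one_pow, one_pow, mul_one]
  ring

def IsOuterRadius (m : ℕ) (r : ℝ → ℝ) : Prop :=
  ∀ R ∈ Ioo 0 (criticalRadius m),
    R < r R ∧ 1 - r R ^ 2 - 2 * R ^ (m + 3) / (((m : ℝ) + 1) * r R ^ (m + 1)) = 0

noncomputable def nwss (m : ℕ) (r : ℝ → ℝ) (R : ℝ) : ℝ :=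
  r R * (1 - R ^ (m + 3) / r R ^ (m + 3)) / √(1 - ((m : ℝ) + 3) * R ^ 2 / ((m : ℝ) + 1))

namespace IsOuterRadius

variable {m : ℕ} {r : ℝ → ℝ} {R : ℝ}

theorem div_mem_Ioo (hr : IsOuterRadius m r) (hR : R ∈ Ioo 0 (criticalRadius m)) :
    R / r R ∈ Ioo 0 1 :=
  ⟨div_pos hR.1 (hR.1.trans (hr R hR).1), (div_lt_one (hR.1.trans (hr R hR).1)).2 (hr R hR).1⟩

theorem radiusSq_div (hr : IsOuterRadius m r) (hR : R ∈ Ioo 0 (criticalRadius m)) :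
    radiusSq m (R / r R) = R ^ 2 :=
  radiusSq_div_of_root (hR.1.trans (hr R hR).1).ne' (hr R hR).2

theorem nwss_eq (hr : IsOuterRadius m r) (hR : R ∈ Ioo 0 (criticalRadius m)) :
    nwss m r R = √(nwssSqRed m (R / r R)) := by
  rw [nwss, nwss_eq_sqrt_nwssSq_of_root hR.1.le (hr R hR).1 (hr R hR).2,
    nwssSq_eq_nwssSqRed m (hr.div_mem_Ioo hR).2.ne]

theorem strictMonoOn_div (hr : IsOuterRadius m r) :
    StrictMonoOn (fun R => R / r R) (Ioo 0 (criticalRadius m)) := by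
  intro a ha b hb hab
  refine ((radiusSq_strictMonoOn m).lt_iff_lt (Ioo_subset_Icc_self (hr.div_mem_Ioo ha))
    (Ioo_subset_Icc_self (hr.div_mem_Ioo hb))).1 ?_
  rw [hr.radiusSq_div ha, hr.radiusSq_div hb]
  exact pow_lt_pow_left₀ hab ha.1.le two_ne_zero

theorem tendsto_nwss (hr : IsOuterRadius m r) {l : Filter ℝ} {q₀ : ℝ} (hq₀ : q₀ ∈ Icc 0 1)
    (hl : ∀ᶠ R in l, R ∈ Ioo 0 (criticalRadius m))
    (hsq : Tendsto (fun R => R ^ 2) l (𝓝 (radiusSq m q₀))) :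
    Tendsto (nwss m r) l (𝓝 √(nwssSqRed m q₀)) := by
  have hq : Tendsto (fun R => R / r R) l (𝓝 q₀) := by
    refine (radiusSq_strictMonoOn m).tendsto_of_tendsto_comp ordConnected_Icc hq₀ ?_ ?_
    · filter_upwards [hl] with R hR using Ioo_subset_Icc_self (hr.div_mem_Ioo hR)
    · refine hsq.congr' ?_
      filter_upwards [hl] with R hR using (hr.radiusSq_div hR).symm
  have hqpos : ∀ᶠ R in l, R / r R ∈ Ici 0 := by
    filter_upwards [hl] with R hR using (hr.div_mem_Ioo hR).1.le
  refine (((continuousOn_nwssSqRed m) q₀ hq₀.1).tendsto.comp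
    (tendsto_nhdsWithin_iff.2 ⟨hq, hqpos⟩)).sqrt.congr' ?_
  filter_upwards [hl] with R hR using (hr.nwss_eq hR).symm

end IsOuterRadius

/-- the Outer Normalized Wall Shear Stress
`τ₂(R) = r₂(R)(1 - Rⁿ/r₂(R)ⁿ)/√(1 - nR²/(n-2))` is strictly increasing and
continuous on `(0, √((n-2)/n))`, with `τ₂ → 1` as `R → 0⁺` and `τ₂ → √n`
as `R → √((n-2)/n)⁻`. -/
theorem outer_NWSS_strict_mono (n : ℕ) (hn : 3 ≤ n) (r₂ : ℝ → ℝ)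
    (hr₂ : ∀ R ∈ Ioo (0 : ℝ) (Real.sqrt (((n : ℝ) - 2) / n)),
      R < r₂ R ∧ 1 - (r₂ R) ^ 2 - 2 * R ^ n / (((n : ℝ) - 2) * (r₂ R) ^ (n - 2)) = 0) :
    StrictMonoOn
      (fun R : ℝ => r₂ R * (1 - R ^ n / (r₂ R) ^ n) / Real.sqrt (1 - n * R ^ 2 / ((n : ℝ) - 2)))
      (Ioo (0 : ℝ) (Real.sqrt (((n : ℝ) - 2) / n))) ∧
    ContinuousOn
      (fun R : ℝ => r₂ R * (1 - R ^ n / (r₂ R) ^ n) / Real.sqrt (1 - n * R ^ 2 / ((n : ℝ) - 2)))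
      (Ioo (0 : ℝ) (Real.sqrt (((n : ℝ) - 2) / n))) ∧
    Tendsto
      (fun R : ℝ => r₂ R * (1 - R ^ n / (r₂ R) ^ n) / Real.sqrt (1 - n * R ^ 2 / ((n : ℝ) - 2)))
      (𝓝[>] 0) (𝓝 1) ∧
    Tendsto
      (fun R : ℝ => r₂ R * (1 - R ^ n / (r₂ R) ^ n) / Real.sqrt (1 - n * R ^ 2 / ((n : ℝ) - 2)))
      (𝓝[<] (Real.sqrt (((n : ℝ) - 2) / n))) (𝓝 (Real.sqrt n)) := by
  obtain ⟨m, rfl⟩ : ∃ m, n = m + 3 := ⟨n - 3, by omega⟩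
  simp only [Nat.cast_add, Nat.cast_ofNat, show m + 3 - 2 = m + 1 by omega,
    show (m : ℝ) + 3 - 2 = m + 1 by ring] at hr₂ ⊢
  have hr : IsOuterRadius m r₂ := hr₂
  have hc : 0 < criticalRadius m := Real.sqrt_pos.2 (by positivity)
  refine ⟨fun a ha b hb hab => ?_, fun R hR => ?_, ?_, ?_⟩
  · change nwss m r₂ a < nwss m r₂ b
    rw [hr.nwss_eq ha, hr.nwss_eq hb]
    exact Real.sqrt_lt_sqrt (nwssSqRed_nonneg m (hr.div_mem_Ioo ha).1.le)
      (nwssSqRed_strictMonoOn m (hr.div_mem_Ioo ha) (hr.div_mem_Ioo hb)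
        (hr.strictMonoOn_div ha hb hab))
  · have h := hr.tendsto_nwss (Ioo_subset_Icc_self (hr.div_mem_Ioo hR)) self_mem_nhdsWithin
      (by rw [hr.radiusSq_div hR]; exact (continuous_pow 2).continuousWithinAt)
    rwa [← hr.nwss_eq hR] at h
  · have h := hr.tendsto_nwss (q₀ := 0) ⟨le_rfl, zero_le_one⟩ (Ioo_mem_nhdsGT hc)
      (by simpa [radiusSq] using ((continuous_pow 2).tendsto (0 : ℝ)).mono_left nhdsWithin_le_nhds)
    rwa [nwssSqRed_zero, Real.sqrt_one] at h
  · have h := hr.tendsto_nwss (q₀ := 1) ⟨zero_le_one, le_rfl⟩ (Ioo_mem_nhdsLT hc) ?_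
    · rwa [nwssSqRed_one] at h
    exact radiusSq_one m ▸ ((continuous_pow 2).tendsto _).mono_left nhdsWithin_le_nhds
end

section
/- The Inner Normalized Wall Shear Stress τ₁(R) = r₁(R)·(Rⁿ/r₁(R)ⁿ - 1)/√(1 - nR²/(n-2)) is a strictly decreasing continuous function of R on (0, √((n-2)/n)), with τ₁(R) → +∞ as R → 0⁺ and τ₁(R) → √n as R → √((n-2)/n)⁻. -/
open Set Filter Topology

/-!
On the curve `f_R(r) = 0` one has `Rⁿ = g(r) := (n-2)/2 · r^(n-2) (1 - r²)`, so
`τ₁(R) = F(r₁(R))` with `F(r) = ((n-2) - n r²) / (2 r √(1 - n g(r)^(2/n) / (n-2)))`.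
As `g` increases on `(0, r*)`, `r* = √((n-2)/n)`, and `r₁(R) < R`, the map `r₁` is an increasing
bijection of `(0, r*)` onto itself, hence continuous, and everything reduces to `F`.

With `c = (n-2)/n` and `s = r²/c ∈ (0, 1)`, `(log F)' < 0` amounts to an algebraic inequality in
`s` whose logarithm is `φ(c, s) > 0`. Now `φ(c, 1) = 0` and `∂ₛφ = 2ψ/(1-c)`, where `ψ(c, 1) = 0`
and `∂ₛψ > 0` is a polynomial inequality, so `φ` decreases to `0` on `(0, 1]`.

As `r → r*`, `g'(r*) = 0` gives `1 - n g(r)^(2/n)/(n-2) ~ n (r* - r)²` while the numerator of `F`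
is `n (r* - r)(r* + r)`, so `F → √n`. As `R → 0`, `r₁(R) < R` gives `τ₁(R) ≥ ((n-2) - nR²)/(2R)`.
-/

lemma pow_eq_pow_sub_two_mul_sq {M : Type*} [Monoid M] {n : ℕ} (hn : 2 ≤ n) (x : M) :
    x^n = x^(n-2) * x^2 := by
  rw [← pow_add, Nat.sub_add_cancel hn]

lemma pow_rpow_two_div {n : ℕ} (hn : n ≠ 0) {x : ℝ} (hx : 0 ≤ x) : (x^n) ^ ((2:ℝ)/n) = x^2 := by
  rw [← Real.rpow_natCast x n, ← Real.rpow_mul hx, mul_div_cancel₀ _ (by exact_mod_cast hn)]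
  exact_mod_cast Real.rpow_natCast x 2

lemma hasDerivAt_div_affine (a b k : ℝ) {s : ℝ} (h : b + k*s ≠ 0) :
    HasDerivAt (fun x => a / (b + k*x)) (-(a*k) / (b + k*s)^2) s := by
  have hu : HasDerivAt (fun x : ℝ => b + k*x) k s := by
    simpa using ((hasDerivAt_id s).const_mul k).const_add b
  have : HasDerivAt (fun x => a/(b+k*x)) _ s := (hasDerivAt_const s a).div hu h
  convert this using 1
  ring

lemma tendsto_sub_div_sq_nhdsLT_of_hasDerivAt {f f' : ℝ → ℝ} {a b : ℝ}
    (hf : ∀ᶠ x in 𝓝 a, HasDerivAt f (f' x) x) (hf' : HasDerivAt f' b a) (ha : f' a = 0) :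
    Tendsto (fun x => (f x - f a) / (x - a)^2) (𝓝[<] a) (𝓝 (b/2)) := by
  have hsq : ∀ x, HasDerivAt (fun y => (y - a)^2) (2 * (x - a)) x := fun x => by
    simpa using ((hasDerivAt_id' x).sub_const a).fun_pow 2
  have hslope : Tendsto (fun x => f' x / (2 * (x - a))) (𝓝[<] a) (𝓝 (b/2)) := by
    have h := ((hasDerivAt_iff_tendsto_slope.1 hf').mono_left
      (nhdsWithin_mono a fun x (hx : x < a) => hx.ne)).div_const 2
    refine h.congr fun x => ?_
    rw [slope_def_field, ha, sub_zero, div_div, mul_comm]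
  apply HasDerivAt.lhopital_zero_nhdsLT
    (nhdsWithin_le_nhds (hf.mono fun x hx => hx.sub_const (f a))) (Eventually.of_forall hsq)
  · filter_upwards [self_mem_nhdsWithin] with x (hx : x < a)
    exact mul_ne_zero two_ne_zero (sub_ne_zero.2 hx.ne)
  · simpa using (hf.self_of_nhds.continuousAt.sub_const (f a)).mono_left nhdsWithin_le_nhds
  · have h : Continuous fun y : ℝ => (y - a)^2 := by fun_prop
    simpa using (h.tendsto a).mono_left nhdsWithin_le_nhds
  · exact hslope

lemma tendsto_one_sub_rpow_div_one_sub (p : ℝ) :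
    Tendsto (fun u : ℝ => (1 - u^p) / (1 - u)) (𝓝[≠] 1) (𝓝 p) := by
  have hd : HasDerivAt (fun x : ℝ => x^p) p 1 := by
    simpa using Real.hasDerivAt_rpow_const (x := 1) (p := p) (Or.inl one_ne_zero)
  refine (hasDerivAt_iff_tendsto_slope.1 hd).congr fun u => ?_
  rw [slope_def_field, Real.one_rpow, ← neg_div_neg_eq, neg_sub, neg_sub]

namespace NWSS

/-- The numerator of `∂ₛψ` in the variables `x = 1 - s`, `y = 1 - c`. -/
noncomputable def psiNum (x y : ℝ) : ℝ :=
  16*y^2 - 8*y^3 + 16*x*y - 40*x*y^2 + 16*x*y^3 + 12*x^3 - 44*x^3*y + 47*x^3*y^2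
    - 14*x^3*y^3 - 8*x^4 + 24*x^4*y - 22*x^4*y^2 + 6*x^4*y^3

lemma psiNum_pos {x y : ℝ} (hx0 : 0 < x) (hx1 : x < 1) (hy0 : 0 < y) (hy1 : y ≤ 2/3) :
    0 < psiNum x y := by
  set a1 : ℝ := 8*y*(1-2*y)*(2-y)
  set a3 : ℝ := 12-44*y+47*y^2-14*y^3
  set a4 : ℝ := -2*(1-y)*(2-y)*(2-3*y)
  have hsplit : psiNum x y = 8*y^2*(2-y) + a1*x + x^3*(a3 + a4*x) := by rw [psiNum]; ring
  rw [hsplit]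
  have ha4 : a4 ≤ 0 := by nlinarith
  have hx3 : 0 < x^3 := by positivity
  -- Bounding `a1 x` below by `min a1 0` and `x³ (a3 + a4 x)` by `min (a3 + a4) 0` leaves four
  -- polynomials in `y` alone.
  have hlin : min a1 0 ≤ a1*x := by
    rcases le_or_gt 0 a1 with h | h
    · exact (min_le_right _ _).trans (by positivity)
    · rw [min_eq_left h.le]; nlinarith
  have hcubic : min (a3 + a4) 0 ≤ x^3*(a3 + a4*x) := by
    rcases le_or_gt 0 (a3 + a4*x) with h | h
    · exact (min_le_right _ _).trans (by positivity)
    · have hx3' : x^3 < 1 := by nlinarith [mul_pos hx0 hx0]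
      have : a3 + a4 ≤ a3 + a4*x := by nlinarith
      exact (min_le_left _ _).trans (by nlinarith)
  have h0 : 0 < 8*y^2*(2-y) := by nlinarith
  have h1 : 0 < 8*y^2*(2-y) + a1 := by nlinarith
  have h2 : 0 < 8*y^2*(2-y) + a3 + a4 := by nlinarith [sq_nonneg (2-5*y)]
  have h3 : 0 < 8*y^2*(2-y) + a1 + a3 + a4 := by nlinarith
  rcases min_cases a1 0 with ⟨e1, -⟩ | ⟨e1, -⟩ <;>
    rcases min_cases (a3 + a4) 0 with ⟨e2, -⟩ | ⟨e2, -⟩ <;>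
    · rw [e1] at hlin; rw [e2] at hcubic; linarith

noncomputable def psi (c s : ℝ) : ℝ :=
  1/(1+s) - c^2/(1-c*s) - (1-3*c)/(1+c+s*(1-3*c)) - c/s

noncomputable def phi (c s : ℝ) : ℝ :=
  2/(1-c) * (Real.log (1+s) + Real.log (1-c*s) - Real.log (1+c+s*(1-3*c)))
    - 2*c/(1-c) * Real.log s - 2 * Real.log (1-c*s) - 2 * Real.log (1/(1-c))

section

variable {c s : ℝ}

lemma one_add_add_mul_pos (hc : 1/3 ≤ c) (hc1 : c < 1) (hs1 : s ≤ 1) :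
    0 < 1+c+s*(1-3*c) := by
  nlinarith [mul_nonneg (sub_nonneg.2 hs1) (by linarith : (0:ℝ) ≤ 3*c-1)]

lemma one_sub_mul_pos (hc : 0 ≤ c) (hc1 : c < 1) (hs1 : s ≤ 1) : 0 < 1-c*s := by
  nlinarith [mul_nonneg hc (sub_nonneg.2 hs1)]

lemma psi_hasDerivAt (hc : 1/3 ≤ c) (hc1 : c < 1) (hs0 : 0 < s) (hs1 : s ≤ 1) :
    HasDerivAt (psi c)
      (c/s^2 + (1-3*c)^2/(1+c+s*(1-3*c))^2 - 1/(1+s)^2 - c^3/(1-c*s)^2) s := by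
  have hD := one_add_add_mul_pos hc hc1 hs1
  have hcs := one_sub_mul_pos (by linarith) hc1 hs1
  have h1 := hasDerivAt_div_affine 1 1 1 (s := s) (by linarith)
  have h2 := hasDerivAt_div_affine (c^2) 1 (-c) (s := s) (by linarith)
  have h3 := hasDerivAt_div_affine (1-3*c) (1+c) (1-3*c) (s := s) (by linarith)
  have h4 := hasDerivAt_div_affine c 0 1 (s := s) (by simpa using hs0.ne')
  have hfun : psi c = fun x => 1/(1+1*x) - c^2/(1+(-c)*x) - (1-3*c)/((1+c)+(1-3*c)*x)
      - c/(0+1*x) := by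
    funext x; simp only [psi]; ring_nf
  have hval : -(1*1)/(1+1*s)^2 - -(c^2*(-c))/(1+(-c)*s)^2
      - -((1-3*c)*(1-3*c))/((1+c)+(1-3*c)*s)^2 - -(c*1)/(0+1*s)^2
      = c/s^2 + (1-3*c)^2/(1+c+s*(1-3*c))^2 - 1/(1+s)^2 - c^3/(1-c*s)^2 := by
    rw [show (1:ℝ)+1*s = 1+s by ring, show (1:ℝ)+(-c)*s = 1-c*s by ring,
      show (1:ℝ)+c+(1-3*c)*s = 1+c+s*(1-3*c) by ring, show (0:ℝ)+1*s = s by ring]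
    ring
  rw [hfun, ← hval]
  exact ((h1.sub h2).sub h3).sub h4

lemma psi_deriv_pos (hc : 1/3 ≤ c) (hc1 : c < 1) (hs0 : 0 < s) (hs1 : s < 1) :
    0 < c/s^2 + (1-3*c)^2/(1+c+s*(1-3*c))^2 - 1/(1+s)^2 - c^3/(1-c*s)^2 := by
  have hD := one_add_add_mul_pos hc hc1 hs1.le
  have hcs := one_sub_mul_pos (by linarith) hc1 hs1.le
  have hQ := psiNum_pos (x := 1-s) (y := 1-c) (by linarith) (by linarith) (by linarith)
    (by linarith)
  have hid : c/s^2 + (1-3*c)^2/(1+c+s*(1-3*c))^2 - 1/(1+s)^2 - c^3/(1-c*s)^2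
      = (1-s) * c * psiNum (1-s) (1-c)
        / (s^2*(1+s)^2*(1-c*s)^2*(1+c+s*(1-3*c))^2) := by
    rw [psiNum, div_add_div _ _ (by positivity) (by positivity),
      div_sub_div _ _ (by positivity) (by positivity),
      div_sub_div _ _ (by positivity) (by positivity),
      div_eq_div_iff (by positivity) (by positivity)]
    ring
  rw [hid]
  positivity

lemma psi_one (hc1 : c < 1) : psi c 1 = 0 := by
  have h : (1:ℝ) - c ≠ 0 := by linarith
  have h2 : (1:ℝ) + c + 1*(1-3*c) = 2*(1-c) := by ring
  simp only [psi, mul_one, h2]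
  field_simp
  ring

lemma psi_neg (hc : 1/3 ≤ c) (hc1 : c < 1) (hs0 : 0 < s) (hs1 : s < 1) : psi c s < 0 := by
  have hmono : StrictMonoOn (psi c) (Icc s 1) := by
    apply strictMonoOn_of_deriv_pos (convex_Icc s 1)
    · exact fun t ht =>
        (psi_hasDerivAt hc hc1 (hs0.trans_le ht.1) ht.2).continuousAt.continuousWithinAt
    · intro t ht
      rw [interior_Icc] at ht
      rw [(psi_hasDerivAt hc hc1 (hs0.trans ht.1) ht.2.le).deriv]
      exact psi_deriv_pos hc hc1 (hs0.trans ht.1) ht.2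
  simpa [psi_one hc1] using hmono (left_mem_Icc.2 hs1.le) (right_mem_Icc.2 hs1.le) hs1

lemma phi_hasDerivAt (hc : 1/3 ≤ c) (hc1 : c < 1) (hs0 : 0 < s) (hs1 : s ≤ 1) :
    HasDerivAt (phi c) (2/(1-c) * psi c s) s := by
  have hD := one_add_add_mul_pos hc hc1 hs1
  have hcs := one_sub_mul_pos (by linarith) hc1 hs1
  have h1s : (0:ℝ) < 1 + s := by linarith
  have t1 : HasDerivAt (fun x : ℝ => Real.log (1+x)) (1/(1+s)) s := by
    simpa using ((hasDerivAt_id s).const_add 1).log h1s.ne'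
  have t2 : HasDerivAt (fun x : ℝ => Real.log (1-c*x)) (-c/(1-c*s)) s := by
    simpa using (((hasDerivAt_id s).const_mul c).const_sub 1).log hcs.ne'
  have t3 : HasDerivAt (fun x : ℝ => Real.log (1+c+x*(1-3*c))) ((1-3*c)/(1+c+s*(1-3*c))) s := by
    simpa using (((hasDerivAt_id s).mul_const (1-3*c)).const_add (1+c)).log hD.ne'
  have t4 : HasDerivAt Real.log s⁻¹ s := Real.hasDerivAt_log hs0.ne'
  have key := (((((t1.add t2).sub t3).const_mul (2/(1-c))).sub (t4.const_mul (2*c/(1-c)))).sub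
    (t2.const_mul 2)).sub_const (2 * Real.log (1/(1-c)))
  replace key : HasDerivAt (phi c) (2/(1-c) * (1/(1+s) + -c/(1-c*s)
      - (1-3*c)/(1+c+s*(1-3*c))) - 2*c/(1-c) * s⁻¹ - 2*(-c/(1-c*s))) s := key
  convert key using 1
  have h1c : (1:ℝ) - c ≠ 0 := by linarith
  simp only [psi]
  field_simp
  ring_nf

lemma phi_one (hc1 : c < 1) : phi c 1 = 0 := by
  have h1 : (0:ℝ) < 1 - c := by linarith
  have h2 : (1:ℝ) + c + 1*(1-3*c) = 2*(1-c) := by ring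
  simp only [phi, mul_one, h2, one_add_one_eq_two, Real.log_mul two_ne_zero h1.ne', one_div,
    Real.log_inv, Real.log_one]
  ring

lemma phi_pos (hc : 1/3 ≤ c) (hc1 : c < 1) (hs0 : 0 < s) (hs1 : s < 1) : 0 < phi c s := by
  have hanti : StrictAntiOn (phi c) (Icc s 1) := by
    apply strictAntiOn_of_deriv_neg (convex_Icc s 1)
    · exact fun t ht =>
        (phi_hasDerivAt hc hc1 (hs0.trans_le ht.1) ht.2).continuousAt.continuousWithinAt
    · intro t ht
      rw [interior_Icc] at ht
      rw [(phi_hasDerivAt hc hc1 (hs0.trans ht.1) ht.2.le).deriv]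
      exact mul_neg_of_pos_of_neg (div_pos two_pos (by linarith))
        (psi_neg hc hc1 (hs0.trans ht.1) ht.2)
  simpa [phi_one hc1] using hanti (left_mem_Icc.2 hs1.le) (right_mem_Icc.2 hs1.le) hs1

end

lemma cast_three_le {n : ℕ} (hn : 3 ≤ n) : (3:ℝ) ≤ n := by exact_mod_cast hn

lemma one_third_le_sub_two_div {n : ℕ} (hn : 3 ≤ n) : 1/3 ≤ ((n:ℝ)-2)/n := by
  have := cast_three_le hn
  rw [le_div_iff₀ (by linarith)]
  linarith

lemma sub_two_div_lt_one {n : ℕ} (hn : 3 ≤ n) : ((n:ℝ)-2)/n < 1 := by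
  have := cast_three_le hn
  rw [div_lt_one (by linarith)]
  linarith

/-- `g n r = Rⁿ` is the equation `f_R(r) = 0` solved for `Rⁿ`. -/
noncomputable def g (n : ℕ) (r : ℝ) : ℝ := ((n:ℝ)-2)/2 * r^(n-2) * (1-r^2)

-- A product, so that differentiating it at `rStar n`, where the last factor vanishes, never
-- produces `r^(n-4)` (a truncated exponent when `n = 3`).
noncomputable def gDeriv (n : ℕ) (r : ℝ) : ℝ := ((n:ℝ)-2)/2 * r^(n-3) * (((n:ℝ)-2) - n*r^2)

noncomputable def rStar (n : ℕ) : ℝ := √(((n:ℝ)-2)/n)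

section

variable {n : ℕ}

lemma g_eq_pow_of_eq_zero (hn : 3 ≤ n) {r R : ℝ} (hr : 0 < r)
    (h : 1 - r^2 - 2 * R^n / (((n:ℝ)-2) * r^(n-2)) = 0) : g n r = R^n := by
  have := cast_three_le hn
  have hden : ((n:ℝ)-2) * r^(n-2) ≠ 0 := mul_ne_zero (by linarith) (pow_pos hr _).ne'
  rw [sub_eq_zero, eq_div_iff hden] at h
  rw [g]
  linear_combination h / 2

lemma rStar_sq (hn : 3 ≤ n) : rStar n ^ 2 = ((n:ℝ)-2)/n := by
  have := cast_three_le hn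
  exact Real.sq_sqrt (div_nonneg (by linarith) (by linarith))

lemma rStar_pos (hn : 3 ≤ n) : 0 < rStar n := by
  have := cast_three_le hn
  exact Real.sqrt_pos.2 (div_pos (by linarith) (by linarith))

lemma rStar_lt_one (hn : 3 ≤ n) : rStar n < 1 := by
  have := cast_three_le hn
  have h : ((n:ℝ)-2)/n < 1 := (div_lt_one (by linarith)).2 (by linarith)
  nlinarith [rStar_sq hn, rStar_pos hn]

lemma sub_mul_sq_pos (hn : 3 ≤ n) {r : ℝ} (hr : r ∈ Ioo 0 (rStar n)) :
    0 < ((n:ℝ)-2) - n*r^2 := by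
  have := cast_three_le hn
  have h : r^2 < rStar n ^ 2 := pow_lt_pow_left₀ hr.2 hr.1.le two_ne_zero
  rw [rStar_sq hn, lt_div_iff₀ (by linarith)] at h
  linarith

lemma g_pos (hn : 3 ≤ n) {r : ℝ} (hr0 : 0 < r) (hr1 : r < 1) : 0 < g n r := by
  have := cast_three_le hn
  have : 0 < 1 - r^2 := by nlinarith
  unfold g
  exact mul_pos (mul_pos (by linarith) (pow_pos hr0 _)) this

lemma g_rStar (hn : 3 ≤ n) : g n (rStar n) = rStar n ^ n := by
  rw [g, pow_eq_pow_sub_two_mul_sq (n := n) (by omega), rStar_sq hn]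
  field_simp
  ring

lemma hasDerivAt_g (hn : 3 ≤ n) (r : ℝ) : HasDerivAt (g n) (gDeriv n r) r := by
  have h : HasDerivAt (fun x : ℝ => ((n:ℝ)-2)/2 * (x^(n-2) - x^n))
      (((n:ℝ)-2)/2 * (((n-2:ℕ):ℝ) * r^(n-2-1) - (n:ℝ) * r^(n-1))) r :=
    ((hasDerivAt_pow (n-2) r).sub (hasDerivAt_pow n r)).const_mul (((n:ℝ)-2)/2)
  have hfun : (fun x : ℝ => ((n:ℝ)-2)/2 * (x^(n-2) - x^n)) = g n := by
    funext x
    rw [g, pow_eq_pow_sub_two_mul_sq (n := n) (by omega) x]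
    ring
  rw [hfun] at h
  convert h using 1
  rw [gDeriv, Nat.cast_sub (by omega : 2 ≤ n), show n - 2 - 1 = n - 3 by omega,
    show n - 1 = (n - 3) + 2 by omega, pow_add]
  push_cast
  ring

lemma gDeriv_pos (hn : 3 ≤ n) {r : ℝ} (hr : r ∈ Ioo 0 (rStar n)) : 0 < gDeriv n r := by
  have := cast_three_le hn
  exact mul_pos (mul_pos (by linarith) (pow_pos hr.1 _)) (sub_mul_sq_pos hn hr)

lemma g_strictMonoOn (hn : 3 ≤ n) : StrictMonoOn (g n) (Icc 0 (rStar n)) := by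
  apply strictMonoOn_of_deriv_pos (convex_Icc _ _)
  · exact fun t _ => (hasDerivAt_g hn t).continuousAt.continuousWithinAt
  · intro t ht
    rw [interior_Icc] at ht
    rw [(hasDerivAt_g hn t).deriv]
    exact gDeriv_pos hn ht

lemma g_lt_g_rStar (hn : 3 ≤ n) {r : ℝ} (hr : r ∈ Ioo 0 (rStar n)) : g n r < g n (rStar n) :=
  g_strictMonoOn hn (Ioo_subset_Icc_self hr) ⟨(rStar_pos hn).le, le_rfl⟩ hr.2

lemma gDeriv_rStar (hn : 3 ≤ n) : gDeriv n (rStar n) = 0 := by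
  rw [gDeriv, rStar_sq hn]
  field_simp
  ring

lemma hasDerivAt_gDeriv_rStar (hn : 3 ≤ n) :
    HasDerivAt (gDeriv n) (-(n * ((n:ℝ)-2)) * rStar n ^ (n-2)) (rStar n) := by
  have h : HasDerivAt (gDeriv n) (((n:ℝ)-2)/2 * (((n-3:ℕ):ℝ) * rStar n ^ (n-3-1))
      * (((n:ℝ)-2) - n * rStar n ^ 2) + ((n:ℝ)-2)/2 * rStar n ^ (n-3)
      * -((n:ℝ) * (((2:ℕ):ℝ) * rStar n ^ (2-1)))) (rStar n) :=
    ((hasDerivAt_pow (n-3) (rStar n)).const_mul (((n:ℝ)-2)/2)).mul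
      (((hasDerivAt_pow 2 (rStar n)).const_mul (n:ℝ)).const_sub ((n:ℝ)-2))
  convert h using 1
  rw [rStar_sq hn, show n - 2 = (n - 3) + 1 by omega, pow_succ]
  field_simp
  ring

/-- On the curve `g n r = Rⁿ` one has `W n r = 1 - nR²/(n-2)` and `F n r = τ₁(R)`. -/
noncomputable def W (n : ℕ) (r : ℝ) : ℝ := 1 - n/((n:ℝ)-2) * g n r ^ ((2:ℝ)/n)

noncomputable def F (n : ℕ) (r : ℝ) : ℝ := (((n:ℝ)-2) - n*r^2) / (2*r*√(W n r))

noncomputable def L (n : ℕ) (r : ℝ) : ℝ :=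
  Real.log (((n:ℝ)-2) - n*r^2) - Real.log 2 - Real.log r - 1/2 * Real.log (W n r)

lemma nwss_eq_F (hn : 3 ≤ n) {r R : ℝ} (hr : 0 < r) (hR : 0 < R) (hg : g n r = R^n) :
    r * (R^n / r^n - 1) / √(1 - n * R^2 / ((n:ℝ)-2)) = F n r := by
  have hR2 : R^2 = g n r ^ ((2:ℝ)/n) := by rw [hg, pow_rpow_two_div (by omega) hR.le]
  have hnum : r * (R^n / r^n - 1) = (((n:ℝ)-2) - n*r^2) / (2*r) := by
    rw [← hg, g, pow_eq_pow_sub_two_mul_sq (n := n) (by omega) r]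
    have := (pow_pos hr (n-2)).ne'
    field_simp
    ring
  rw [hnum, F, W, ← hR2, div_div, mul_div_right_comm]

lemma W_eq_one_sub_rpow (hn : 3 ≤ n) {r : ℝ} (hr : r ∈ Ioo 0 (rStar n)) :
    W n r = 1 - (g n r / g n (rStar n)) ^ ((2:ℝ)/n) := by
  have hq := rStar_pos hn
  rw [Real.div_rpow (g_pos hn hr.1 (hr.2.trans (rStar_lt_one hn))).le
    (g_pos hn hq (rStar_lt_one hn)).le, g_rStar hn, pow_rpow_two_div (by omega) hq.le,
    rStar_sq hn, W, div_div_eq_mul_div]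
  ring

lemma W_pos (hn : 3 ≤ n) {r : ℝ} (hr : r ∈ Ioo 0 (rStar n)) : 0 < W n r := by
  have hg := g_pos hn hr.1 (hr.2.trans (rStar_lt_one hn))
  have hgq := g_pos hn (rStar_pos hn) (rStar_lt_one hn)
  rw [W_eq_one_sub_rpow hn hr, sub_pos]
  exact Real.rpow_lt_one (div_pos hg hgq).le ((div_lt_one hgq).2 (g_lt_g_rStar hn hr))
    (by positivity)

lemma W_le_one (hn : 3 ≤ n) {r : ℝ} (hr : r ∈ Ioo 0 (rStar n)) : W n r ≤ 1 := by
  have hg := g_pos hn hr.1 (hr.2.trans (rStar_lt_one hn))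
  have hgq := g_pos hn (rStar_pos hn) (rStar_lt_one hn)
  rw [W_eq_one_sub_rpow hn hr, sub_le_self_iff]
  exact Real.rpow_nonneg (div_pos hg hgq).le _

lemma key_ineq_pow (hn : 3 ≤ n) {s : ℝ} (hs0 : 0 < s) (hs1 : s < 1) :
    ((n:ℝ)/2)^2 * s^(n-2) * (1 - ((n:ℝ)-2)/n*s)^2 * (1 + ((n:ℝ)-2)/n + s*(1-3*(((n:ℝ)-2)/n)))^n
      < ((1+s) * (1 - ((n:ℝ)-2)/n*s))^n := by
  have hc3 := one_third_le_sub_two_div hn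
  have hc1 := sub_two_div_lt_one hn
  set c : ℝ := ((n:ℝ)-2)/n with hc
  have hD := one_add_add_mul_pos hc3 hc1 hs1.le
  have hcs := one_sub_mul_pos (by linarith) hc1 hs1.le
  have hphi := phi_pos hc3 hc1 hs0 hs1
  have e1 : 2/(1-c) = (n:ℝ) := by rw [hc]; field_simp; ring
  have e2 : 2*c/(1-c) = (n:ℝ)-2 := by rw [hc]; field_simp; ring
  have e3 : 1/(1-c) = (n:ℝ)/2 := by rw [hc]; field_simp; ring
  rw [phi, e1, e2, e3] at hphi
  rw [← Real.log_lt_log_iff (by positivity) (by positivity), Real.log_pow,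
    Real.log_mul (by positivity) (by positivity), Real.log_mul (by positivity) (by positivity),
    Real.log_mul (by positivity) (by positivity), Real.log_pow, Real.log_pow, Real.log_pow,
    Real.log_pow, Real.log_mul (by linarith) hcs.ne', Nat.cast_sub (by omega : 2 ≤ n)]
  push_cast
  nlinarith [hphi]

-- `dL n r < 0` after clearing denominators, in the variables `c = (n-2)/n`, `s = r²/c`.
lemma key_ineq (hn : 3 ≤ n) {r : ℝ} (hr : r ∈ Ioo 0 (rStar n)) :
    n/((n:ℝ)-2) * g n r ^ ((2:ℝ)/n)
        * (1 + ((n:ℝ)-2)/n + (n*r^2/((n:ℝ)-2)) * (1-3*(((n:ℝ)-2)/n)))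
      < (1 + n*r^2/((n:ℝ)-2)) * (1-r^2) := by
  have hN := cast_three_le hn
  have hn2 : (0:ℝ) < (n:ℝ)-2 := by linarith
  have hc3 := one_third_le_sub_two_div hn
  have hc1 := sub_two_div_lt_one hn
  set c : ℝ := ((n:ℝ)-2)/n with hc
  set s : ℝ := n*r^2/((n:ℝ)-2) with hs
  set A : ℝ := g n r ^ ((2:ℝ)/n) with hA
  have hs0 : 0 < s := div_pos (mul_pos (by linarith) (pow_pos hr.1 2)) hn2
  have hs1 : s < 1 := by
    rw [hs, div_lt_one hn2]; linarith [sub_mul_sq_pos hn hr]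
  have hcs : c * s = r^2 := by rw [hc, hs]; field_simp
  have hg := g_pos hn hr.1 (hr.2.trans (rStar_lt_one hn))
  have hAn : A^n = g n r ^ 2 := by
    rw [hA, ← Real.rpow_natCast, ← Real.rpow_mul hg.le, div_mul_cancel₀ _ (by linarith)]
    exact_mod_cast Real.rpow_natCast (g n r) 2
  have hid : (n/((n:ℝ)-2) * A * (1+c+s*(1-3*c)))^n
      = ((n:ℝ)/2)^2 * s^(n-2) * (1-c*s)^2 * (1+c+s*(1-3*c))^n := by
    have hsplit : (n/((n:ℝ)-2))^n = (n/((n:ℝ)-2))^(n-2) * (n/((n:ℝ)-2))^2 :=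
      pow_eq_pow_sub_two_mul_sq (by omega) _
    have hspow : s^(n-2) = (n/((n:ℝ)-2))^(n-2) * (r^2)^(n-2) := by
      rw [show s = n/((n:ℝ)-2) * r^2 by rw [hs]; ring, mul_pow]
    have hgsq : g n r ^ 2 = (((n:ℝ)-2)/2)^2 * (r^2)^(n-2) * (1-r^2)^2 := by
      rw [g, mul_pow, mul_pow, pow_right_comm]
    rw [mul_pow, mul_pow, hAn, hsplit, hgsq, hspow, hcs]
    field_simp
  have hpow := key_ineq_pow hn hs0 hs1
  rw [← hc, ← hid] at hpow
  rw [← hcs]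
  exact lt_of_pow_lt_pow_left₀ n
    (mul_nonneg (by linarith) (one_sub_mul_pos (by linarith) hc1 hs1.le).le) hpow

noncomputable def dL (n : ℕ) (r : ℝ) : ℝ :=
  (g n r ^ ((2:ℝ)/n) * (((n:ℝ)-2) - n*r^2)^2 - ((n:ℝ)-2) * (1-r^2) * W n r * (((n:ℝ)-2) + n*r^2))
    / (((n:ℝ)-2) * r * (1-r^2) * W n r * (((n:ℝ)-2) - n*r^2))

lemma hasDerivAt_L (hn : 3 ≤ n) {r : ℝ} (hr : r ∈ Ioo 0 (rStar n)) :
    HasDerivAt (L n) (dL n r) r := by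
  have := cast_three_le hn
  have hr1 := hr.2.trans (rStar_lt_one hn)
  have hg := g_pos hn hr.1 hr1
  have hW := W_pos hn hr
  have hN := sub_mul_sq_pos hn hr
  have h1r2 : (0:ℝ) < 1 - r^2 := by nlinarith [hr.1]
  have hNum : HasDerivAt (fun x : ℝ => ((n:ℝ)-2) - n*x^2) (-(n*(2*r))) r := by
    simpa using ((hasDerivAt_pow 2 r).const_mul (n:ℝ)).const_sub ((n:ℝ)-2)
  have hWd : HasDerivAt (W n)
      (-(n/((n:ℝ)-2) * (gDeriv n r * ((2:ℝ)/n) * g n r ^ ((2:ℝ)/n - 1)))) r :=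
    (((hasDerivAt_g hn r).rpow_const (Or.inl hg.ne')).const_mul (n/((n:ℝ)-2))).const_sub 1
  have key := (((hNum.log hN.ne').sub_const (Real.log 2)).sub (Real.hasDerivAt_log hr.1.ne')).sub
    ((hWd.log hW.ne').const_mul (1/2))
  replace key : HasDerivAt (L n) _ r := key
  convert key using 1
  have hgd : gDeriv n r = g n r * (((n:ℝ)-2) - n*r^2) / (r*(1-r^2)) := by
    rw [eq_div_iff (mul_pos hr.1 h1r2).ne', gDeriv, g, show n - 2 = (n - 3) + 1 by omega, pow_succ]
    ring
  rw [hgd, Real.rpow_sub hg, Real.rpow_one, dL]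
  have : (n:ℝ) - 2 ≠ 0 := by linarith
  have := hr.1.ne'; have := hN.ne'; have := h1r2.ne'; have := hW.ne'; have := hg.ne'
  field_simp
  ring

lemma dL_neg (hn : 3 ≤ n) {r : ℝ} (hr : r ∈ Ioo 0 (rStar n)) : dL n r < 0 := by
  have := cast_three_le hn
  have hW := W_pos hn hr
  have hN := sub_mul_sq_pos hn hr
  have h1r2 : (0:ℝ) < 1 - r^2 := by nlinarith [hr.1, hr.2.trans (rStar_lt_one hn)]
  have hdiff : g n r ^ ((2:ℝ)/n) * (((n:ℝ)-2) - n*r^2)^2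
      - ((n:ℝ)-2) * (1-r^2) * W n r * (((n:ℝ)-2) + n*r^2)
      = ((n:ℝ)-2)^2 * (n/((n:ℝ)-2) * g n r ^ ((2:ℝ)/n)
          * (1 + ((n:ℝ)-2)/n + (n*r^2/((n:ℝ)-2)) * (1-3*(((n:ℝ)-2)/n)))
        - (1 + n*r^2/((n:ℝ)-2)) * (1-r^2)) := by
    have : (n:ℝ) - 2 ≠ 0 := by linarith
    rw [W]
    field_simp
    ring
  rw [dL, hdiff]
  refine div_neg_of_neg_of_pos (mul_neg_of_pos_of_neg (by nlinarith) ?_) ?_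
  · linarith [key_ineq hn hr]
  · exact mul_pos (mul_pos (mul_pos (mul_pos (by linarith) hr.1) h1r2) hW) hN

lemma L_strictAntiOn (hn : 3 ≤ n) : StrictAntiOn (L n) (Ioo 0 (rStar n)) := by
  apply strictAntiOn_of_deriv_neg (convex_Ioo _ _)
  · exact fun r hr => (hasDerivAt_L hn hr).continuousAt.continuousWithinAt
  · intro r hr
    rw [interior_Ioo] at hr
    rw [(hasDerivAt_L hn hr).deriv]
    exact dL_neg hn hr

lemma F_eq_exp_L (hn : 3 ≤ n) {r : ℝ} (hr : r ∈ Ioo 0 (rStar n)) : F n r = Real.exp (L n r) := by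
  have hW := W_pos hn hr
  have hsqrt : Real.exp (1/2 * Real.log (W n r)) = √(W n r) := by
    rw [mul_comm, Real.exp_mul, Real.exp_log hW, Real.sqrt_eq_rpow]
  rw [F, L, Real.exp_sub, Real.exp_sub, Real.exp_sub, Real.exp_log (sub_mul_sq_pos hn hr),
    Real.exp_log hr.1, Real.exp_log two_pos, hsqrt, div_div, div_div, mul_assoc]

lemma F_strictAntiOn (hn : 3 ≤ n) : StrictAntiOn (F n) (Ioo 0 (rStar n)) := by
  intro a ha b hb hab
  rw [F_eq_exp_L hn ha, F_eq_exp_L hn hb]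
  exact Real.exp_lt_exp.2 (L_strictAntiOn hn ha hb hab)

lemma F_continuousOn (hn : 3 ≤ n) : ContinuousOn (F n) (Ioo 0 (rStar n)) := by
  have hL : ContinuousOn (fun r => Real.exp (L n r)) (Ioo 0 (rStar n)) :=
    Real.continuous_exp.comp_continuousOn fun r hr =>
      (hasDerivAt_L hn hr).continuousAt.continuousWithinAt
  exact hL.congr fun r hr => F_eq_exp_L hn hr

lemma div_le_F (hn : 3 ≤ n) {r : ℝ} (hr : r ∈ Ioo 0 (rStar n)) :
    (((n:ℝ)-2) - n*r^2) / (2*r) ≤ F n r := by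
  have hW := W_pos hn hr
  have hsW : √(W n r) ≤ 1 := Real.sqrt_le_one.2 (W_le_one hn hr)
  have := Real.sqrt_pos.2 hW
  exact div_le_div_of_nonneg_left (sub_mul_sq_pos hn hr).le (mul_pos (mul_pos two_pos hr.1) this)
    (by nlinarith [hr.1])

lemma g_sub_div_sq_tendsto (hn : 3 ≤ n) :
    Tendsto (fun r => (g n r - g n (rStar n)) / (r - rStar n)^2) (𝓝[<] rStar n)
      (𝓝 (-(n * ((n:ℝ)-2)) * rStar n ^ (n-2) / 2)) :=
  tendsto_sub_div_sq_nhdsLT_of_hasDerivAt (Eventually.of_forall (hasDerivAt_g hn))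
    (hasDerivAt_gDeriv_rStar hn) (gDeriv_rStar hn)

lemma W_div_sq_tendsto (hn : 3 ≤ n) :
    Tendsto (fun r => W n r / (rStar n - r)^2) (𝓝[<] rStar n) (𝓝 n) := by
  have := cast_three_le hn
  have hq := rStar_pos hn
  have hgq := g_pos hn hq (rStar_lt_one hn)
  have hmem : ∀ᶠ r in 𝓝[<] rStar n, r ∈ Ioo 0 (rStar n) := Ioo_mem_nhdsLT hq
  have hu : Tendsto (fun r => g n r / g n (rStar n)) (𝓝[<] rStar n) (𝓝[≠] 1) := by
    refine tendsto_nhdsWithin_iff.2 ⟨?_, ?_⟩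
    · have h := ((hasDerivAt_g hn (rStar n)).continuousAt.div_const (g n (rStar n))).mono_left
        (nhdsWithin_le_nhds (s := Iio (rStar n)))
      simpa only [div_self hgq.ne'] using h
    · filter_upwards [hmem] with r hr
      exact ((div_lt_one hgq).2 (g_lt_g_rStar hn hr)).ne
  have hlim := (((tendsto_one_sub_rpow_div_one_sub ((2:ℝ)/n)).comp hu).mul
    (g_sub_div_sq_tendsto hn).neg).div_const (g n (rStar n))
  have hval : (2:ℝ)/n * -(-(n * ((n:ℝ)-2)) * rStar n ^ (n-2) / 2) / g n (rStar n) = n := by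
    have : (n:ℝ) - 2 ≠ 0 := by linarith
    rw [g_rStar hn, pow_eq_pow_sub_two_mul_sq (n := n) (by omega), rStar_sq hn]
    field_simp
  rw [hval] at hlim
  refine hlim.congr' ?_
  filter_upwards [hmem] with r hr
  have hgr : g n r ≠ g n (rStar n) :=
    (g_lt_g_rStar hn hr).ne
  have h1u : 1 - g n r / g n (rStar n) ≠ 0 :=
    sub_ne_zero.2 fun h => hgr ((div_eq_one_iff_eq hgq.ne').1 h.symm)
  have hrq : r - rStar n ≠ 0 := sub_ne_zero.2 hr.2.ne
  have hqr : rStar n - r ≠ 0 := sub_ne_zero.2 hr.2.ne'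
  rw [W_eq_one_sub_rpow hn hr, Function.comp_apply]
  field_simp
  ring

lemma F_tendsto_rStar (hn : 3 ≤ n) :
    Tendsto (F n) (𝓝[<] rStar n) (𝓝 (√n)) := by
  have hq := rStar_pos hn
  have hfactor : Tendsto (fun r => n * (rStar n + r) / (2 * r)) (𝓝[<] rStar n) (𝓝 n) := by
    have h : ContinuousAt (fun r => n * (rStar n + r) / (2 * r)) (rStar n) := by
      fun_prop (disch := positivity)
    have hval : (n:ℝ) * (rStar n + rStar n) / (2 * rStar n) = n := by field_simp; ring
    simpa only [hval] using h.tendsto.mono_left nhdsWithin_le_nhds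
  have hlim := hfactor.div ((W_div_sq_tendsto hn).sqrt) (by positivity)
  rw [Real.div_sqrt] at hlim
  refine hlim.congr' ?_
  filter_upwards [Ioo_mem_nhdsLT hq] with r hr
  have hqr : 0 < rStar n - r := sub_pos.2 hr.2
  have hsub : ((n:ℝ)-2) - n*r^2 = n * (rStar n - r) * (rStar n + r) := by
    have : (n:ℝ) - 2 = n * rStar n ^ 2 := by rw [rStar_sq hn]; field_simp
    rw [this]; ring
  rw [Pi.div_apply, F, hsub, Real.sqrt_div' _ (sq_nonneg _), Real.sqrt_sq hqr.le]
  field_simp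

end

/-- The hypothesis on `r₁`, with `f_R(r) = 0` written as `g n r = Rⁿ`. -/
def IsInnerRadius (n : ℕ) (ρ : ℝ → ℝ) : Prop :=
  ∀ R ∈ Ioo 0 (rStar n), ρ R ∈ Ioo 0 R ∧ g n (ρ R) = R^n

namespace IsInnerRadius

variable {n : ℕ} {ρ : ℝ → ℝ}

lemma mem_Ioo (hρ : IsInnerRadius n ρ) {R : ℝ} (hR : R ∈ Ioo 0 (rStar n)) :
    ρ R ∈ Ioo 0 (rStar n) :=
  ⟨(hρ R hR).1.1, (hρ R hR).1.2.trans hR.2⟩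

lemma strictMonoOn (hn : 3 ≤ n) (hρ : IsInnerRadius n ρ) : StrictMonoOn ρ (Ioo 0 (rStar n)) := by
  intro a ha b hb hab
  have hpow : g n (ρ a) < g n (ρ b) := by
    rw [(hρ a ha).2, (hρ b hb).2]
    exact pow_lt_pow_left₀ hab ha.1.le (by omega)
  have hIcc : ∀ {R}, R ∈ Ioo 0 (rStar n) → ρ R ∈ Icc 0 (rStar n) := fun hR =>
    Ioo_subset_Icc_self (hρ.mem_Ioo hR)
  exact (g_strictMonoOn hn).lt_iff_lt (hIcc ha) (hIcc hb) |>.1 hpow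

lemma exists_eq (hn : 3 ≤ n) (hρ : IsInnerRadius n ρ) {r : ℝ} (hr : r ∈ Ioo 0 (rStar n)) :
    ∃ R ∈ Ioo 0 (rStar n), ρ R = r := by
  have hq := rStar_pos hn
  have hg := g_pos hn hr.1 (hr.2.trans (rStar_lt_one hn))
  set R := g n r ^ ((n:ℝ)⁻¹)
  have hRn : R^n = g n r := Real.rpow_inv_natCast_pow hg.le (by omega)
  have hR : R ∈ Ioo 0 (rStar n) := by
    refine ⟨Real.rpow_pos_of_pos hg _, lt_of_pow_lt_pow_left₀ n hq.le ?_⟩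
    rw [hRn, ← g_rStar hn]
    exact g_lt_g_rStar hn hr
  refine ⟨R, hR, (g_strictMonoOn hn).injOn (Ioo_subset_Icc_self (hρ.mem_Ioo hR))
    (Ioo_subset_Icc_self hr) ?_⟩
  rw [(hρ R hR).2, hRn]

lemma continuousOn (hn : 3 ≤ n) (hρ : IsInnerRadius n ρ) : ContinuousOn ρ (Ioo 0 (rStar n)) := by
  have himage : ρ '' Ioo 0 (rStar n) = Ioo 0 (rStar n) := by
    refine Subset.antisymm (image_subset_iff.2 fun R hR => hρ.mem_Ioo hR) fun r hr => ?_
    obtain ⟨R, hR, rfl⟩ := hρ.exists_eq hn hr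
    exact mem_image_of_mem ρ hR
  intro R hR
  refine ((hρ.strictMonoOn hn).continuousAt_of_image_mem_nhds (isOpen_Ioo.mem_nhds hR) ?_)
    |>.continuousWithinAt
  rw [himage]
  exact isOpen_Ioo.mem_nhds (hρ.mem_Ioo hR)

lemma tendsto_rStar (hn : 3 ≤ n) (hρ : IsInnerRadius n ρ) :
    Tendsto ρ (𝓝[<] rStar n) (𝓝[<] rStar n) := by
  have hmem : ∀ᶠ R in 𝓝[<] rStar n, R ∈ Ioo 0 (rStar n) := Ioo_mem_nhdsLT (rStar_pos hn)
  refine tendsto_nhdsWithin_iff.2 ⟨tendsto_order.2 ⟨fun b hb => ?_, fun b hb => ?_⟩, ?_⟩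
  · rcases le_or_gt b 0 with hb0 | hb0
    · filter_upwards [hmem] with R hR
      exact hb0.trans_lt (hρ.mem_Ioo hR).1
    · obtain ⟨R₀, hR₀, rfl⟩ := hρ.exists_eq hn ⟨hb0, hb⟩
      filter_upwards [Ioo_mem_nhdsLT hR₀.2] with R hR
      exact hρ.strictMonoOn hn hR₀ ⟨hR₀.1.trans hR.1, hR.2⟩ hR.1
  · filter_upwards [hmem] with R hR
    exact (hρ.mem_Ioo hR).2.trans hb
  · filter_upwards [hmem] with R hR
    exact (hρ.mem_Ioo hR).2

lemma tendsto_F_atTop (hn : 3 ≤ n) (hρ : IsInnerRadius n ρ) :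
    Tendsto (fun R => F n (ρ R)) (𝓝[>] 0) atTop := by
  have := cast_three_le hn
  have hlim : Tendsto (fun R : ℝ => (((n:ℝ)-2) - n*R^2) / 2 * R⁻¹) (𝓝[>] 0) atTop := by
    refine Tendsto.pos_mul_atTop (C := ((n:ℝ)-2)/2) (by linarith) ?_ tendsto_inv_nhdsGT_zero
    have h : Continuous fun R : ℝ => (((n:ℝ)-2) - n*R^2) / 2 := by fun_prop
    simpa using (h.tendsto 0).mono_left nhdsWithin_le_nhds
  refine tendsto_atTop_mono' _ ?_ hlim
  filter_upwards [Ioo_mem_nhdsGT (rStar_pos hn)] with R hR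
  obtain ⟨⟨hr0, hrR⟩, -⟩ := hρ R hR
  have hr := hρ.mem_Ioo hR
  calc (((n:ℝ)-2) - n*R^2) / 2 * R⁻¹ = (((n:ℝ)-2) - n*R^2) / (2*R) := by ring
    _ ≤ (((n:ℝ)-2) - n*(ρ R)^2) / (2 * ρ R) := by
      have : ρ R ^ 2 ≤ R ^ 2 := pow_le_pow_left₀ hr0.le hrR.le 2
      apply div_le_div₀ (sub_mul_sq_pos hn hr).le _ (by linarith) (by linarith)
      nlinarith
    _ ≤ F n (ρ R) := div_le_F hn hr

end IsInnerRadius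

end NWSS

open NWSS

/-- the Inner Normalized Wall Shear Stress
`τ₁(R) = r₁(R)(Rⁿ/r₁(R)ⁿ - 1)/√(1 - nR²/(n-2))` is strictly decreasing and
continuous on `(0, √((n-2)/n))`, with `τ₁ → +∞` as `R → 0⁺` and `τ₁ → √n`
as `R → √((n-2)/n)⁻`. -/
theorem inner_NWSS_strict_anti (n : ℕ) (hn : 3 ≤ n) (r₁ : ℝ → ℝ)
    (hr₁ : ∀ R ∈ Ioo (0 : ℝ) (Real.sqrt (((n : ℝ) - 2) / n)),
      0 < r₁ R ∧ r₁ R < R ∧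
        1 - (r₁ R) ^ 2 - 2 * R ^ n / (((n : ℝ) - 2) * (r₁ R) ^ (n - 2)) = 0) :
    StrictAntiOn
      (fun R : ℝ => r₁ R * (R ^ n / (r₁ R) ^ n - 1) / Real.sqrt (1 - n * R ^ 2 / ((n : ℝ) - 2)))
      (Ioo (0 : ℝ) (Real.sqrt (((n : ℝ) - 2) / n))) ∧
    ContinuousOn
      (fun R : ℝ => r₁ R * (R ^ n / (r₁ R) ^ n - 1) / Real.sqrt (1 - n * R ^ 2 / ((n : ℝ) - 2)))
      (Ioo (0 : ℝ) (Real.sqrt (((n : ℝ) - 2) / n))) ∧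
    Tendsto
      (fun R : ℝ => r₁ R * (R ^ n / (r₁ R) ^ n - 1) / Real.sqrt (1 - n * R ^ 2 / ((n : ℝ) - 2)))
      (𝓝[>] 0) atTop ∧
    Tendsto
      (fun R : ℝ => r₁ R * (R ^ n / (r₁ R) ^ n - 1) / Real.sqrt (1 - n * R ^ 2 / ((n : ℝ) - 2)))
      (𝓝[<] (Real.sqrt (((n : ℝ) - 2) / n))) (𝓝 (Real.sqrt n)) := by
  have hρ : IsInnerRadius n r₁ := fun R hR =>
    ⟨⟨(hr₁ R hR).1, (hr₁ R hR).2.1⟩, g_eq_pow_of_eq_zero hn (hr₁ R hR).1 (hr₁ R hR).2.2⟩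
  have hτ : EqOn (F n ∘ r₁)
      (fun R => r₁ R * (R ^ n / (r₁ R) ^ n - 1) / √(1 - n * R ^ 2 / ((n : ℝ) - 2)))
      (Ioo 0 (rStar n)) :=
    fun R hR => (nwss_eq_F hn (hρ R hR).1.1 hR.1 (hρ R hR).2).symm
  have hmaps : MapsTo r₁ (Ioo 0 (rStar n)) (Ioo 0 (rStar n)) := fun R hR => hρ.mem_Ioo hR
  refine ⟨?_, ?_, ?_, ?_⟩
  · exact ((F_strictAntiOn hn).comp_strictMonoOn (hρ.strictMonoOn hn) hmaps).congr hτ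
  · exact ((F_continuousOn hn).comp (hρ.continuousOn hn) hmaps).congr hτ.symm
  · exact (hρ.tendsto_F_atTop hn).congr' (eventuallyEq_of_mem (Ioo_mem_nhdsGT (rStar_pos hn)) hτ)
  · exact ((F_tendsto_rStar hn).comp (hρ.tendsto_rStar hn)).congr'
      (eventuallyEq_of_mem (Ioo_mem_nhdsLT (rStar_pos hn)) hτ)
end

section
/- For any R ∈ (0, √((n-2)/n)) and n ≥ 3, the Inner NWSS strictly exceeds the Outer NWSS: τ₁(R) > √n > τ₂(R). -/
/-!
Write `f = f_R` and `u = f'/2`, so that `u(r) = r (Rⁿ/rⁿ - 1)` is the numerator of `τ₁` and `-u` that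
of `τ₂`. The quantity `E = u² + n f` satisfies `E' = -2 (n - 1) u² / r`, so it strictly decreases on
`(0, ∞)` (its derivative vanishes only at `r = R`). At the zeros `r₁ < R < r₂` of `f` we have
`E = u²`, while `E(R) = n (1 - n R²/(n - 2))` because `u(R) = 0`. Hence
`u(r₂)² < n (1 - n R²/(n - 2)) < u(r₁)²`, and `u(r₁) > 0`; dividing by the square root gives both
inequalities.
-/

open Set

noncomputable def lapse (n : ℕ) (R r : ℝ) : ℝ :=
  1 - r ^ 2 - 2 * R ^ n / (((n : ℝ) - 2) * r ^ (n - 2))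

noncomputable def halfSlope (n : ℕ) (R r : ℝ) : ℝ := r * (R ^ n / r ^ n - 1)

noncomputable def lapseEnergy (n : ℕ) (R r : ℝ) : ℝ := halfSlope n R r ^ 2 + n * lapse n R r

section

variable {n : ℕ} {R r : ℝ}

lemma hasDerivAt_lapse (hn : 3 ≤ n) (hr : r ≠ 0) :
    HasDerivAt (lapse n R) (2 * halfSlope n R r) r := by
  obtain ⟨k, rfl⟩ : ∃ k, n = k + 3 := ⟨n - 3, by omega⟩
  have hk : ((k + 3 : ℕ) : ℝ) - 2 = k + 1 := by push_cast; ring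
  have hpow : HasDerivAt (fun x : ℝ => ((k : ℝ) + 1) * x ^ (k + 1))
      (((k : ℝ) + 1) * (((k + 1 : ℕ) : ℝ) * r ^ k)) r :=
    (hasDerivAt_pow (k + 1) r).const_mul _
  have h := ((hasDerivAt_const r (1 : ℝ)).sub (hasDerivAt_pow 2 r)).sub
    ((hasDerivAt_const r (2 * R ^ (k + 3))).div hpow (by positivity))
  unfold lapse
  rw [hk]
  refine h.congr_deriv ?_
  unfold halfSlope
  push_cast
  field_simp
  ring

lemma hasDerivAt_halfSlope (hr : r ≠ 0) :
    HasDerivAt (halfSlope n R) ((1 - n) * (R ^ n / r ^ n) - 1) r := by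
  have h : HasDerivAt (fun x => x * (R ^ n / x ^ n - 1)) _ r := (hasDerivAt_id' r).mul
    (((hasDerivAt_const r (R ^ n)).div (hasDerivAt_pow n r) (pow_ne_zero n hr)).sub_const 1)
  refine h.congr_deriv ?_
  rcases n with _ | k
  · simp
  · simp only [Nat.add_sub_cancel]
    push_cast
    field_simp
    ring

lemma hasDerivAt_lapseEnergy (hn : 3 ≤ n) (hr : r ≠ 0) :
    HasDerivAt (lapseEnergy n R) (-2 * (n - 1) * halfSlope n R r ^ 2 / r) r := by
  refine (((hasDerivAt_halfSlope hr).pow 2).add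
    ((hasDerivAt_lapse hn hr).const_mul (n : ℝ))).congr_deriv ?_
  unfold halfSlope
  generalize R ^ n / r ^ n = q
  field_simp
  ring

lemma halfSlope_ne_zero (hn : n ≠ 0) (hr : 0 < r) (hR : 0 ≤ R) (hrR : r ≠ R) :
    halfSlope n R r ≠ 0 := by
  have : R ^ n ≠ r ^ n := fun h => hrR ((pow_left_inj₀ hR hr.le hn).1 h).symm
  unfold halfSlope
  have : R ^ n / r ^ n ≠ 1 := by
    rwa [ne_eq, div_eq_one_iff_eq (by positivity)]
  exact mul_ne_zero hr.ne' (sub_ne_zero.2 this)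

lemma halfSlope_pos (hn : n ≠ 0) (hr : 0 < r) (hrR : r < R) : 0 < halfSlope n R r :=
  mul_pos hr <| sub_pos.2 <| (one_lt_div (by positivity)).2 (pow_lt_pow_left₀ hrR hr.le hn)

lemma lapseEnergy_of_lapse_eq_zero (h : lapse n R r = 0) :
    lapseEnergy n R r = halfSlope n R r ^ 2 := by
  simp [lapseEnergy, h]

lemma lapseEnergy_self (hn : 3 ≤ n) (hR : R ≠ 0) :
    lapseEnergy n R R = n * (1 - n * R ^ 2 / ((n : ℝ) - 2)) := by
  obtain ⟨k, rfl⟩ : ∃ k, n = k + 3 := ⟨n - 3, by omega⟩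
  have hk : ((k + 3 : ℕ) : ℝ) - 2 = k + 1 := by push_cast; ring
  simp only [lapseEnergy, halfSlope, lapse, hk, div_self (pow_ne_zero _ hR), sub_self, mul_zero,
    show k + 3 - 2 = k + 1 by omega]
  push_cast
  field_simp
  ring

lemma strictAntiOn_lapseEnergy (hn : 3 ≤ n) (hR : 0 < R) :
    StrictAntiOn (lapseEnergy n R) (Ioi 0) := by
  have hn0 : n ≠ 0 := by omega
  have hderiv : ∀ r ∈ Ioi (0 : ℝ), r ≠ R → deriv (lapseEnergy n R) r < 0 := by
    intro r hr hrR
    rw [(hasDerivAt_lapseEnergy hn (ne_of_gt hr)).deriv]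
    have : 0 < halfSlope n R r ^ 2 := by
      have := halfSlope_ne_zero hn0 hr hR.le hrR
      positivity
    have : (0 : ℝ) < n - 1 := by
      have : (3 : ℝ) ≤ n := by exact_mod_cast hn
      linarith
    exact div_neg_of_neg_of_pos (by nlinarith) hr
  have hcont : ContinuousOn (lapseEnergy n R) (Ioi 0) := fun r hr =>
    (hasDerivAt_lapseEnergy hn (ne_of_gt hr)).continuousAt.continuousWithinAt
  rw [← Ioc_union_Ici_eq_Ioi hR]
  refine StrictAntiOn.union ?_ ?_ (isGreatest_Ioc hR) isLeast_Ici
  · refine strictAntiOn_of_deriv_neg (convex_Ioc 0 R) (hcont.mono Ioc_subset_Ioi_self) ?_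
    rw [interior_Ioc]
    exact fun r hr => hderiv r hr.1 hr.2.ne
  · refine strictAntiOn_of_deriv_neg (convex_Ici R)
      (hcont.mono fun r hr => lt_of_lt_of_le hR hr) ?_
    rw [interior_Ici]
    exact fun r hr => hderiv r (hR.trans hr) hr.ne'

end

lemma sqrt_lt_div_sqrt {a x s : ℝ} (hs : 0 < s) (hx : 0 < x) (h : a * s < x ^ 2) :
    √a < x / √s := by
  rw [lt_div_iff₀ (Real.sqrt_pos.2 hs), ← Real.sqrt_mul' a hs.le]
  exact (Real.sqrt_lt' hx).2 h

lemma div_sqrt_lt_sqrt {a x s : ℝ} (hs : 0 < s) (h : x ^ 2 < a * s) :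
    x / √s < √a := by
  rw [div_lt_iff₀ (Real.sqrt_pos.2 hs), ← Real.sqrt_mul' a hs.le]
  exact Real.lt_sqrt_of_sq_lt h

/-- for any `R ∈ (0, √((n-2)/n))` and `n ≥ 3`,
the Inner NWSS strictly exceeds `√n` which strictly exceeds the Outer NWSS:
`τ₁(R) > √n > τ₂(R)`. -/
theorem inner_NWSS_gt_sqrt_n_gt_outer_NWSS (n : ℕ) (hn : 3 ≤ n) (R : ℝ)
    (hR0 : 0 < R) (hRmax : R < Real.sqrt (((n : ℝ) - 2) / n))
    (r₁ r₂ : ℝ) (hr₁0 : 0 < r₁) (hr₁R : r₁ < R) (hRr₂ : R < r₂)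
    (hz₁ : 1 - r₁ ^ 2 - 2 * R ^ n / (((n : ℝ) - 2) * r₁ ^ (n - 2)) = 0)
    (hz₂ : 1 - r₂ ^ 2 - 2 * R ^ n / (((n : ℝ) - 2) * r₂ ^ (n - 2)) = 0) :
    r₁ * (R ^ n / r₁ ^ n - 1) / Real.sqrt (1 - n * R ^ 2 / ((n : ℝ) - 2)) > Real.sqrt n ∧
    Real.sqrt n > r₂ * (1 - R ^ n / r₂ ^ n) / Real.sqrt (1 - n * R ^ 2 / ((n : ℝ) - 2)) := by
  have hn2 : (0 : ℝ) < n - 2 := by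
    have : (3 : ℝ) ≤ n := by exact_mod_cast hn
    linarith
  have hs : 0 < 1 - n * R ^ 2 / ((n : ℝ) - 2) := by
    have := (Real.lt_sqrt hR0.le).1 hRmax
    rw [lt_div_iff₀ (by linarith)] at this
    rw [sub_pos, div_lt_one hn2]
    linarith
  have hE := strictAntiOn_lapseEnergy hn hR0
  have hE₁ := hE (mem_Ioi.2 hr₁0) (mem_Ioi.2 hR0) hr₁R
  have hE₂ := hE (mem_Ioi.2 hR0) (mem_Ioi.2 (hR0.trans hRr₂)) hRr₂
  rw [lapseEnergy_self hn hR0.ne'] at hE₁ hE₂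
  rw [lapseEnergy_of_lapse_eq_zero hz₁] at hE₁
  rw [lapseEnergy_of_lapse_eq_zero hz₂] at hE₂
  constructor
  · exact sqrt_lt_div_sqrt hs (halfSlope_pos (by omega) hr₁0 hr₁R) hE₁
  · rw [show r₂ * (1 - R ^ n / r₂ ^ n) = -halfSlope n R r₂ by unfold halfSlope; ring]
    exact div_sqrt_lt_sqrt hs (by rwa [neg_sq])
end

section
/- Let u solve Δu = -n in Ω with the gradient estimate |∇u|² ≤ 2(u_max - u) on a connected component N of Ω \ MAX(u). Then the vector field X = ∇u/(2n(u_max - u))^{n/2} satisfies div X ≤ 0 on N. -/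
open Set

noncomputable section

/-- The Euclidean divergence of a vector field. -/
def divg {n : ℕ} (X : EuclideanSpace ℝ (Fin n) → EuclideanSpace ℝ (Fin n))
    (x : EuclideanSpace ℝ (Fin n)) : ℝ :=
  ∑ i, fderiv ℝ (fun y => X y i) x (EuclideanSpace.single i 1)

/-- under the gradient estimate `|∇u|² ≤ 2(u_max - u)` on a
connected component `N` of `Ω \ MAX(u)`, the vector field
`X = ∇u/(2n(u_max - u))^{n/2}` has nonpositive divergence on `N`. -/
theorem divergence_nonpositive (n : ℕ) (hn : 3 ≤ n)
    (Ω : Set (EuclideanSpace ℝ (Fin n)))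
    (hΩopen : IsOpen Ω) (hΩbdd : Bornology.IsBounded Ω)
    (u : EuclideanSpace ℝ (Fin n) → ℝ)
    (hu : ContDiffOn ℝ (⊤ : ℕ∞) u (closure Ω))
    (hlap : ∀ x ∈ Ω, lap u x = -n)
    (hbd : ∀ x ∈ frontier Ω, u x = 0)
    (M : ℝ) (hM : IsGreatest (u '' closure Ω) M)
    (N : Set (EuclideanSpace ℝ (Fin n))) (p : EuclideanSpace ℝ (Fin n))
    (hp : p ∈ Ω \ {x | u x = M})
    (hN : N = connectedComponentIn (Ω \ {x | u x = M}) p)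
    (hgrad : ∀ x ∈ N, ‖gradient u x‖ ^ 2 ≤ 2 * (M - u x)) :
    ∀ x ∈ N,
      divg (fun y => ((2 * n * (M - u y)) ^ (-(n : ℝ) / 2) : ℝ) • gradient u y) x ≤ 0 := by
  intro x hx
  have hxN : x ∈ Ω \ {x | u x = M} := by
    rw [hN] at hx
    exact connectedComponentIn_subset _ _ hx
  obtain ⟨hxΩ, hxne⟩ := hxN
  have huxle : u x ≤ M := hM.2 ⟨x, subset_closure hxΩ, rfl⟩
  have hMu : 0 < M - u x := sub_pos.2 (lt_of_le_of_ne huxle hxne)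
  have hn0 : (0:ℝ) < n := by
    have : (3:ℝ) ≤ n := by exact_mod_cast hn
    linarith
  have hgx : 0 < 2 * (n:ℝ) * (M - u x) := by positivity
  have hu' : ContDiffAt ℝ (⊤ : ℕ∞) u x := (hu.mono subset_closure).contDiffAt (hΩopen.mem_nhds hxΩ)
  have hdu : DifferentiableAt ℝ u x := hu'.differentiableAt (by simp)
  have hdfd : DifferentiableAt ℝ (fderiv ℝ u) x :=
    (hu'.fderiv_right (m := 1) (WithTop.coe_le_coe.2 le_top)).differentiableAt one_ne_zero
  -- gradient components equal fderiv applied to basis vectors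
  have hgrad_eq : ∀ y i, gradient u y i = fderiv ℝ u y (EuclideanSpace.single i 1) := by
    intro y i
    have h1 : @inner ℝ _ _ (gradient u y) (EuclideanSpace.single i (1:ℝ)) =
        fderiv ℝ u y (EuclideanSpace.single i 1) := by
      rw [gradient]
      exact InnerProductSpace.toDual_symm_apply
    rw [EuclideanSpace.inner_single_right] at h1
    simpa using h1
  set q : ℝ := -(n:ℝ)/2 with hq
  set G := gradient u x with hG
  set g : ℝ := 2 * (n:ℝ) * (M - u x) with hgdef
  -- derivative of the scalar factor
  have hgd : HasFDerivAt (fun y => 2*(n:ℝ)*(M - u y)) ((2*(n:ℝ)) • (0 - fderiv ℝ u x)) x := by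
    exact ((hasFDerivAt_const M x).sub hdu.hasFDerivAt).const_mul (2*(n:ℝ))
  have hfd : HasFDerivAt (fun y => (2*(n:ℝ)*(M-u y)) ^ q)
      ((q * g ^ (q - 1)) • ((2*(n:ℝ)) • (0 - fderiv ℝ u x))) x :=
    hgd.rpow_const (Or.inl hgx.ne')
  have hdiff_f : DifferentiableAt ℝ (fun y => (2*(n:ℝ)*(M-u y)) ^ q) x := hfd.differentiableAt
  -- component functions of gradient
  have hdiffG : ∀ i, DifferentiableAt ℝ (fun y => gradient u y i) x := by
    intro i
    have : (fun y => gradient u y i) = fun y => fderiv ℝ u y (EuclideanSpace.single i 1) := by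
      funext y; exact hgrad_eq y i
    rw [this]
    exact hdfd.clm_apply (differentiableAt_const _)
  -- fderiv of gradient components at basis vectors and the laplacian
  have hsumlap : ∑ i, fderiv ℝ (fun y => gradient u y i) x (EuclideanSpace.single i 1)
      = -(n:ℝ) := by
    have h2 : ∀ i, fderiv ℝ (fun y => gradient u y i) x (EuclideanSpace.single i 1)
        = iteratedFDeriv ℝ 2 u x ![EuclideanSpace.single i 1, EuclideanSpace.single i 1] := by
      intro i
      have hre : (fun y => gradient u y i) = fun y => fderiv ℝ u y (EuclideanSpace.single i 1) := by
        funext y; exact hgrad_eq y i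
      rw [hre, fderiv_clm_apply hdfd (differentiableAt_const _),
        iteratedFDeriv_two_apply]
      simp
    rw [Finset.sum_congr rfl (fun i _ => h2 i)]
    exact hlap x hxΩ
  -- compute divergence
  have hX : ∀ i, (fun y => (((2 * (n:ℝ) * (M - u y)) ^ q : ℝ) • gradient u y) i)
      = fun y => ((2*(n:ℝ)*(M-u y)) ^ q) * gradient u y i := by
    intro i; funext y; simp [PiLp.smul_apply, smul_eq_mul]
  have hdiv : divg (fun y => ((2 * n * (M - u y)) ^ (-(n : ℝ) / 2) : ℝ) • gradient u y) x
      = ∑ i, (g ^ q * fderiv ℝ (fun y => gradient u y i) x (EuclideanSpace.single i 1)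
          + gradient u x i * ((q * g ^ (q-1)) * ((2*(n:ℝ)) * (0 - fderiv ℝ u x (EuclideanSpace.single i 1))))) := by
    unfold divg
    refine Finset.sum_congr rfl (fun i _ => ?_)
    rw [show (fun y => (((2 * (n:ℕ) * (M - u y)) ^ (-(n : ℝ) / 2) : ℝ) • gradient u y) i)
        = fun y => ((2*(n:ℝ)*(M-u y)) ^ q) * gradient u y i from hX i]
    rw [fderiv_fun_mul hdiff_f (hdiffG i)]
    rw [hfd.fderiv]
    simp [hgdef, smul_eq_mul, mul_comm, mul_assoc, mul_left_comm]
  rw [hdiv]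
  rw [Finset.sum_add_distrib, ← Finset.mul_sum, hsumlap]
  -- second sum
  have hnorm : ∑ i, gradient u x i * gradient u x i = ‖gradient u x‖ ^ 2 := by
    rw [← real_inner_self_eq_norm_sq]
    rw [PiLp.inner_apply]; simp only [RCLike.inner_apply, conj_trivial]
  have hsum2 : ∑ i, gradient u x i * ((q * g ^ (q-1)) * ((2*(n:ℝ)) * (0 - fderiv ℝ u x (EuclideanSpace.single i 1))))
      = (q * g ^ (q-1)) * (2*(n:ℝ)) * (- ‖gradient u x‖ ^ 2) := by
    have : ∀ i, gradient u x i * ((q * g ^ (q-1)) * ((2*(n:ℝ)) * (0 - fderiv ℝ u x (EuclideanSpace.single i 1))))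
        = (q * g ^ (q-1)) * (2*(n:ℝ)) * (-(gradient u x i * gradient u x i)) := by
      intro i
      rw [← hgrad_eq x i]
      ring
    rw [Finset.sum_congr rfl (fun i _ => this i), ← Finset.mul_sum, Finset.sum_neg_distrib, hnorm]
  rw [hsum2]
  -- final arithmetic
  have hA : 0 < g ^ (q - 1) := Real.rpow_pos_of_pos hgx _
  have hgq : g ^ q = g ^ (q - 1) * g := by
    nth_rewrite 1 [show q = (q - 1) + 1 by ring]
    rw [Real.rpow_add hgx, Real.rpow_one]
  have hgr : ‖gradient u x‖ ^ 2 ≤ 2 * (M - u x) := hgrad x hx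
  have hnn : 0 ≤ ‖gradient u x‖ ^ 2 := by positivity
  rw [hgq]
  set S := ‖gradient u x‖ ^ 2 with hS
  set B := g ^ (q - 1) with hB
  have key : (n:ℝ)^2 * B * S ≤ (n:ℝ)^2 * B * (2 * (M - u x)) :=
    mul_le_mul_of_nonneg_left hgr (by positivity)
  rw [hq, hgdef]
  nlinarith [key, hA, hMu]
end
end

section
/- For the model quantity W_R = ((Ψⁿ - Rⁿ)/Ψ^{n-1})², expressed via the pseudo-radial function Ψ = ψ±(u), one has the expansion W_R = 2n(u_max - u) ∓ (4(n-1)√(2n)/(3R))(u_max - u)^{3/2} + O((u_max - u)²) as u → u_max, with the minus sign for Ψ = ψ₊ and the plus sign for Ψ = ψ₋. In particular W_R/(u_max - u) → 2n. -/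
/-!
Put `Ψ = R (1 + x)`. Then `u_max - u_R(Ψ) = R² · drop n x` and `(Ψⁿ - Rⁿ) / Ψ^(n-1) = R · wRoot n x`,
where `drop` and `wRoot` only involve `(1 + x)^(-(n-2))` and `(1 + x)^(-(n-1))`. The binomial
series gives `drop n x = (n/2) x² - n(n-1)/6 x³ + O(x⁴)` and
`wRoot n x ^ 2 = n² x² - n²(n-1) x³ + O(x⁴)`, so `wRoot² - 2n·drop = -(2/3) n²(n-1) x³ + O(x⁴)`;
this cubic term is `∓ (4(n-1)√(2n)/3) · drop^(3/2)` up to `O(x⁴)`, the sign being that of `x`.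
Bernoulli's inequality gives `drop n x ≥ x²/2` for `x > -1`, so `x → 0` as `u → u_max` and
`x⁴ = O((u_max - u)²)`.
-/

open Asymptotics Filter Topology Set

theorem Real.isBigO_one_add_rpow_sub_taylor (a : ℝ) :
    (fun x : ℝ => (1 + x) ^ a - (1 + a * x + a * (a - 1) / 2 * x ^ 2
      + a * (a - 1) * (a - 2) / 6 * x ^ 3)) =O[𝓝 0] fun x => x ^ 4 := by
  have h := Real.one_add_rpow_hasFPowerSeriesAt_zero (a := a) |>.isBigO_sub_partialSum_pow 4
  simp only [zero_add, Real.norm_eq_abs, pow_abs] at h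
  refine (isBigO_abs_right.mp h).congr_left fun x => ?_
  simp only [FormalMultilinearSeries.partialSum, binomialSeries, Ring.choose_eq_smul, smul_eq_mul,
    FormalMultilinearSeries.apply_eq_prod_smul_coeff, Finset.prod_const, Finset.card_univ,
    Fintype.card_fin, FormalMultilinearSeries.coeff_ofScalars, Finset.sum_range_succ,
    Finset.range_one, Finset.sum_singleton, pow_zero, Nat.factorial, Nat.cast_one, inv_one,
    descPochhammer_zero, Polynomial.smeval_one, one_smul, mul_one, pow_one, Nat.succ_eq_add_one,
    zero_add, descPochhammer_succ_right, CharP.cast_eq_zero, sub_zero, one_mul,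
    Polynomial.smeval_X, Nat.reduceAdd, Polynomial.smeval_mul, Polynomial.smeval_sub,
    Nat.reduceMul, Polynomial.smeval_natCast, nsmul_eq_mul, sub_right_inj]
  ring

theorem isBigO_inv_one_add_pow_sub_taylor (k : ℕ) :
    (fun x : ℝ => ((1 + x) ^ k)⁻¹ - (1 - k * x + k * (k + 1) / 2 * x ^ 2
      - k * (k + 1) * (k + 2) / 6 * x ^ 3)) =O[𝓝 0] fun x => x ^ 4 := by
  refine (Real.isBigO_one_add_rpow_sub_taylor (-k)).congr' ?_ EventuallyEq.rfl
  filter_upwards [Ioi_mem_nhds (show (-1 : ℝ) < 0 by norm_num)] with x hx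
  rw [Real.rpow_neg (by linarith [mem_Ioi.1 hx]), Real.rpow_natCast]
  ring

theorem one_sub_mul_le_inv_one_add_pow (k : ℕ) {x : ℝ} (hx : -1 < x) :
    1 - k * x ≤ ((1 + x) ^ k)⁻¹ := by
  have hx1 : 0 < 1 + x := by linarith
  have hy : -x ≤ (1 + x)⁻¹ - 1 := by
    have : (1 + x)⁻¹ - 1 + x = x ^ 2 / (1 + x) := by field_simp; ring
    linarith [div_nonneg (sq_nonneg x) hx1.le]
  have hy2 : -2 ≤ (1 + x)⁻¹ - 1 := by linarith [inv_pos.2 hx1]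
  calc 1 - k * x ≤ 1 + k * ((1 + x)⁻¹ - 1) := by nlinarith [(Nat.cast_nonneg k : (0 : ℝ) ≤ k)]
    _ ≤ (1 + ((1 + x)⁻¹ - 1)) ^ k := one_add_mul_le_pow hy2 k
    _ = ((1 + x) ^ k)⁻¹ := by rw [add_sub_cancel, inv_pow]

theorem abs_mul_sqrt_sub_mul_sqrt_le {v b : ℝ} (hv : 0 ≤ v) (hb : 0 ≤ b) :
    |v * √v - b * √b| ≤ (√v + √b) * |v - b| := by
  obtain ⟨p, hp, rfl⟩ : ∃ p, 0 ≤ p ∧ p ^ 2 = v := ⟨√v, Real.sqrt_nonneg v, Real.sq_sqrt hv⟩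
  obtain ⟨q, hq, rfl⟩ : ∃ q, 0 ≤ q ∧ q ^ 2 = b := ⟨√b, Real.sqrt_nonneg b, Real.sq_sqrt hb⟩
  rw [Real.sqrt_sq hp, Real.sqrt_sq hq]
  calc |p ^ 2 * p - q ^ 2 * q| = |p - q| * (p ^ 2 + p * q + q ^ 2) := by
        rw [← abs_of_nonneg (by positivity : 0 ≤ p ^ 2 + p * q + q ^ 2), ← abs_mul]
        congr 1; ring
    _ ≤ |p - q| * (p + q) ^ 2 := by gcongr; nlinarith [mul_nonneg hp hq]
    _ = (p + q) * |p ^ 2 - q ^ 2| := by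
        rw [show p ^ 2 - q ^ 2 = (p - q) * (p + q) by ring, abs_mul,
          abs_of_nonneg (add_nonneg hp hq)]
        ring

theorem exists_bound_of_isBigO_nhdsLT {f g : ℝ → ℝ} {a : ℝ} (h : f =O[𝓝[<] a] g) :
    ∃ C δ : ℝ, 0 < δ ∧ ∀ t, a - δ < t → t < a → |f t| ≤ C * |g t| := by
  obtain ⟨C, hC⟩ := h.bound
  obtain ⟨l, hl, hsub⟩ := mem_nhdsLT_iff_exists_Ioo_subset.1 hC
  exact ⟨C, a - l, sub_pos.2 hl, fun t h1 h2 => hsub ⟨by linarith, h2⟩⟩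

theorem tendsto_div_of_isBigO_sub {W : ℝ → ℝ} {a A c : ℝ}
    (h : (fun t => W t - (A * (a - t) - c * (a - t) * √(a - t))) =O[𝓝[<] a]
      fun t => (a - t) ^ 2) :
    Tendsto (fun t => W t / (a - t)) (𝓝[<] a) (𝓝 A) := by
  have hv : Tendsto (fun t => a - t) (𝓝[<] a) (𝓝 0) :=
    ((continuous_const.sub continuous_id).tendsto' a 0 (sub_self a)).mono_left
      nhdsWithin_le_nhds
  have ho := h.trans_isLittleO ((isLittleO_pow_id one_lt_two).comp_tendsto hv)
  have hlim := (ho.tendsto_div_nhds_zero.add_const A).sub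
    (((Real.continuous_sqrt.tendsto' 0 0 Real.sqrt_zero).comp hv).const_mul c)
  rw [zero_add, mul_zero, sub_zero] at hlim
  refine hlim.congr' ?_
  filter_upwards [self_mem_nhdsWithin] with t ht
  have : a - t ≠ 0 := (sub_pos.2 ht).ne'
  simp only [Function.comp_apply]
  field_simp
  ring

namespace ModelProfile

variable {n : ℕ} {R x : ℝ}

noncomputable def profile (n : ℕ) (R r : ℝ) : ℝ :=
  (1 - r ^ 2) / 2 - R ^ n / (((n : ℝ) - 2) * r ^ (n - 2))

noncomputable def drop (n : ℕ) (x : ℝ) : ℝ :=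
  x + x ^ 2 / 2 + (((1 + x) ^ (n - 2))⁻¹ - 1) / ((n : ℝ) - 2)

noncomputable def wRoot (n : ℕ) (x : ℝ) : ℝ := 1 + x - ((1 + x) ^ (n - 1))⁻¹

theorem profile_self (hn : 3 ≤ n) (hR : R ≠ 0) :
    profile n R R = (1 - n * R ^ 2 / ((n : ℝ) - 2)) / 2 := by
  obtain ⟨k, rfl⟩ : ∃ k, n = k + 3 := ⟨n - 3, by omega⟩
  have hk : (k : ℝ) + 1 ≠ 0 := by positivity
  simp only [profile, show k + 3 - 2 = k + 1 by omega]
  push_cast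
  rw [show (k : ℝ) + 3 - 2 = k + 1 by ring]
  field_simp
  ring

theorem profile_self_sub_profile (hn : 3 ≤ n) (hR : R ≠ 0) (hx : 1 + x ≠ 0) :
    profile n R R - profile n R (R * (1 + x)) = R ^ 2 * drop n x := by
  obtain ⟨k, rfl⟩ : ∃ k, n = k + 3 := ⟨n - 3, by omega⟩
  have hk : (k : ℝ) + 1 ≠ 0 := by positivity
  simp only [profile, drop, show k + 3 - 2 = k + 1 by omega, mul_pow]
  push_cast
  rw [show (k : ℝ) + 3 - 2 = k + 1 by ring]
  field_simp
  ring

theorem div_pow_pred_eq_wRoot (hn : 1 ≤ n) (hR : R ≠ 0) (hx : 1 + x ≠ 0) :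
    ((R * (1 + x)) ^ n - R ^ n) / (R * (1 + x)) ^ (n - 1) = R * wRoot n x := by
  obtain ⟨k, rfl⟩ : ∃ k, n = k + 1 := ⟨n - 1, by omega⟩
  simp only [wRoot, Nat.add_sub_cancel, mul_pow]
  field_simp
  ring

theorem sq_div_two_le_drop (hn : 3 ≤ n) (hx : -1 < x) : x ^ 2 / 2 ≤ drop n x := by
  have hn2 : (0 : ℝ) < n - 2 := by
    have : (3 : ℝ) ≤ n := by exact_mod_cast hn
    linarith
  have h := one_sub_mul_le_inv_one_add_pow (n - 2) hx
  rw [Nat.cast_sub (by omega), Nat.cast_ofNat] at h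
  have : -x ≤ (((1 + x) ^ (n - 2))⁻¹ - 1) / ((n : ℝ) - 2) := by
    rw [le_div_iff₀ hn2]; linarith
  unfold drop; linarith

theorem isBigO_drop_sub (hn : 3 ≤ n) :
    (fun x => drop n x - (n / 2 * x ^ 2 - n * (n - 1) / 6 * x ^ 3)) =O[𝓝 0] (· ^ 4) := by
  obtain ⟨k, rfl⟩ : ∃ k, n = k + 3 := ⟨n - 3, by omega⟩
  have hk : (k : ℝ) + 1 ≠ 0 := by positivity
  refine ((isBigO_inv_one_add_pow_sub_taylor (k + 1)).const_mul_left ((k : ℝ) + 1)⁻¹).congr_left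
    fun x => ?_
  simp only [drop, show k + 3 - 2 = k + 1 by omega]
  push_cast
  rw [show (k : ℝ) + 3 - 2 = k + 1 by ring]
  field_simp
  ring

theorem isBigO_wRoot_sub (hn : 1 ≤ n) :
    (fun x => wRoot n x - (n * x - n * (n - 1) / 2 * x ^ 2)) =O[𝓝 0] (· ^ 3) := by
  obtain ⟨k, rfl⟩ : ∃ k, n = k + 1 := ⟨n - 1, by omega⟩
  have h4 : (fun x : ℝ => x ^ 4) =O[𝓝 0] (· ^ 3) := (isLittleO_pow_pow (by norm_num)).isBigO
  refine (((isBigO_inv_one_add_pow_sub_taylor k).trans h4).neg_left.add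
    ((isBigO_refl (· ^ 3) _).const_mul_left ((k : ℝ) * (k + 1) * (k + 2) / 6))).congr_left
    fun x => ?_
  simp only [wRoot, Nat.add_sub_cancel]
  push_cast
  ring

theorem isBigO_wRoot_sq_sub_drop (hn : 3 ≤ n) :
    (fun x => wRoot n x ^ 2 - 2 * n * drop n x + 2 / 3 * n ^ 2 * (n - 1) * x ^ 3)
      =O[𝓝 0] (· ^ 4) := by
  set P : ℝ → ℝ := fun x => n * x - n * (n - 1) / 2 * x ^ 2
  have he := isBigO_wRoot_sub (n := n) (by omega)
  have hP : P =O[𝓝 0] fun x => x := by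
    have hb : Tendsto (fun x : ℝ => n - n * (n - 1) / 2 * x) (𝓝 0) (𝓝 (n - n * (n - 1) / 2 * 0)) :=
      (by fun_prop : Continuous fun x : ℝ => n - n * (n - 1) / 2 * x).tendsto 0
    exact ((isBigO_refl (fun x : ℝ => x) _).mul (hb.isBigO_one ℝ)).congr
      (fun x => by simp only [P]; ring) (fun x => mul_one x)
  have h31 : (fun x : ℝ => x ^ 3) =O[𝓝 0] fun x => x := by
    simpa using (isLittleO_pow_pow (𝕜 := ℝ) (m := 1) (n := 3) (by norm_num)).isBigO
  -- `wRoot² - P² = e (e + 2P)` with `e = wRoot - P`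
  have hprod := he.mul ((he.trans h31).add (hP.const_mul_left 2))
  refine ((hprod.congr_right fun x => by ring).sub ((isBigO_drop_sub hn).const_mul_left (2 * n))
    |>.add ((isBigO_refl (· ^ 4) _).const_mul_left ((n : ℝ) ^ 2 * (n - 1) ^ 2 / 4))).congr_left
    fun x => ?_
  simp only [P]
  ring

theorem isBigO_drop_mul_sqrt_sub (hn : 3 ≤ n) :
    (fun x => drop n x * √(drop n x) - √(n / 2) ^ 3 * |x| ^ 3) =O[𝓝 0] (· ^ 4) := by
  set b : ℝ → ℝ := fun x => n / 2 * x ^ 2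
  have hsqrt_b : ∀ x, √(b x) = √(n / 2) * |x| := fun x => by
    rw [Real.sqrt_mul (by positivity), Real.sqrt_sq_eq_abs]
  have hb : ∀ x, b x * √(b x) = √(n / 2) ^ 3 * |x| ^ 3 := fun x => by
    have h := Real.sq_sqrt (by positivity : (0 : ℝ) ≤ n / 2)
    rw [hsqrt_b]
    simp only [b, ← sq_abs x]
    linear_combination (-(|x| ^ 3 * √(n / 2))) * h
  have h43 : (fun x : ℝ => x ^ 4) =O[𝓝 0] (· ^ 3) := (isLittleO_pow_pow (by norm_num)).isBigO
  have h32 : (fun x : ℝ => x ^ 3) =O[𝓝 0] (· ^ 2) := (isLittleO_pow_pow (by norm_num)).isBigO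
  have hdb : (fun x => drop n x - b x) =O[𝓝 0] (· ^ 3) :=
    (((isBigO_drop_sub hn).trans h43).sub
      ((isBigO_refl (· ^ 3) _).const_mul_left ((n : ℝ) * (n - 1) / 6))).congr_left
      fun x => by simp only [b]; ring
  obtain ⟨C, hC⟩ := ((hdb.trans h32).add ((isBigO_refl (· ^ 2) _).const_mul_left
    ((n : ℝ) / 2))).bound
  have hsum : (fun x => √(drop n x) + √(b x)) =O[𝓝 0] fun x => x := by
    refine .of_bound (√C + √(n / 2)) ?_
    filter_upwards [hC] with x hx
    simp only [b, sub_add_cancel, Real.norm_eq_abs, abs_pow, sq_abs] at hx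
    have hle : √(drop n x) ≤ √C * |x| := by
      rw [← Real.sqrt_sq_eq_abs, ← Real.sqrt_mul' C (sq_nonneg x)]
      exact Real.sqrt_le_sqrt ((le_abs_self _).trans hx)
    rw [Real.norm_eq_abs, Real.norm_eq_abs, hsqrt_b,
      abs_of_nonneg (by positivity : 0 ≤ √(drop n x) + √(n / 2) * |x|)]
    linarith
  refine IsBigO.trans ?_ ((hsum.mul hdb).congr_right fun x => by ring)
  refine .of_bound' ?_
  filter_upwards [Ioi_mem_nhds (show (-1 : ℝ) < 0 by norm_num)] with x hx
  have hdrop : 0 ≤ drop n x := (div_nonneg (sq_nonneg x) zero_le_two).trans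
    (sq_div_two_le_drop hn hx)
  rw [Real.norm_eq_abs, Real.norm_eq_abs, ← hb, abs_mul,
    abs_of_nonneg (by positivity : 0 ≤ √(drop n x) + √(b x))]
  exact abs_mul_sqrt_sub_mul_sqrt_le hdrop (by positivity)

theorem isBigO_wRoot_sq_sub_expansion (hn : 3 ≤ n) {s : Set ℝ} {σ : ℝ}
    (hσ : ∀ x ∈ s, σ * |x| ^ 3 = x ^ 3) :
    (fun x => wRoot n x ^ 2 - (2 * n * drop n x
      - σ * (4 * ((n : ℝ) - 1) * √(2 * n) / 3) * drop n x * √(drop n x))) =O[𝓝[s] 0] (· ^ 4) := by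
  have hκ : 4 * ((n : ℝ) - 1) * √(2 * n) / 3 * √(n / 2) ^ 3 = 2 / 3 * (n : ℝ) ^ 2 * (n - 1) := by
    have h1 : √(2 * n) * √(n / 2) = n := by
      rw [← Real.sqrt_mul (by positivity), show 2 * (n : ℝ) * (n / 2) = n ^ 2 by ring,
        Real.sqrt_sq (by positivity)]
    rw [show 4 * ((n : ℝ) - 1) * √(2 * n) / 3 * √(n / 2) ^ 3
        = 4 * ((n : ℝ) - 1) / 3 * (√(2 * n) * √(n / 2)) * √(n / 2) ^ 2 by ring,
      h1, Real.sq_sqrt (by positivity)]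
    ring
  refine (((isBigO_wRoot_sq_sub_drop hn).add ((isBigO_drop_mul_sqrt_sub hn).const_mul_left
    (σ * (4 * ((n : ℝ) - 1) * √(2 * n) / 3)))).mono nhdsWithin_le_nhds).congr' ?_ .rfl
  filter_upwards [self_mem_nhdsWithin] with x hx
  rw [← hσ x hx]
  linear_combination (-σ * |x| ^ 3) * hκ

theorem zero_lt_profile_self (hn : 3 ≤ n) (hR : 0 < R) (hRmax : R < √(((n : ℝ) - 2) / n)) :
    0 < profile n R R := by
  have hn2 : (0 : ℝ) < n - 2 := by
    have : (3 : ℝ) ≤ n := by exact_mod_cast hn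
    linarith
  have h := (Real.lt_sqrt hR.le).1 hRmax
  rw [lt_div_iff₀ (by linarith)] at h
  rw [profile_self hn hR.ne', div_pos_iff_of_pos_right two_pos, sub_pos,
    div_lt_one hn2]
  linarith

theorem isBigO_branch_sub_expansion (hn : 3 ≤ n) (hR : 0 < R) {ψ : ℝ → ℝ} {s : Set ℝ} {σ : ℝ}
    (hσ : ∀ x ∈ s, σ * |x| ^ 3 = x ^ 3)
    (hψ : ∀ᶠ t in 𝓝[<] profile n R R, 0 < ψ t ∧ ψ t / R - 1 ∈ s ∧ profile n R (ψ t) = t) :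
    (fun t => ((ψ t ^ n - R ^ n) / ψ t ^ (n - 1)) ^ 2
      - (2 * n * (profile n R R - t) - σ * (4 * ((n : ℝ) - 1) * √(2 * n) / (3 * R))
        * (profile n R R - t) * √(profile n R R - t)))
      =O[𝓝[<] profile n R R] fun t => (profile n R R - t) ^ 2 := by
  set M := profile n R R
  set ξ : ℝ → ℝ := fun t => ψ t / R - 1
  have hscale : ∀ᶠ t in 𝓝[<] M, -1 < ξ t ∧ ψ t = R * (1 + ξ t) ∧
      M - t = R ^ 2 * drop n (ξ t) := by
    filter_upwards [hψ] with t ⟨hψ0, _, ht⟩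
    have hξ : 1 + ξ t = ψ t / R := by simp only [ξ]; ring
    have hr : ψ t = R * (1 + ξ t) := by rw [hξ]; field_simp
    refine ⟨by linarith [div_pos hψ0 hR], hr, ?_⟩
    rw [← profile_self_sub_profile hn hR.ne' (by rw [hξ]; positivity), ← hr, ht]
  have hξ_sq : ∀ᶠ t in 𝓝[<] M, ξ t ^ 2 ≤ 2 / R ^ 2 * (M - t) := by
    filter_upwards [hscale] with t ⟨hξ, _, hv⟩
    rw [hv, div_mul_eq_mul_div, le_div_iff₀ (by positivity)]
    nlinarith [sq_div_two_le_drop hn hξ]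
  have hbound : Tendsto (fun t => 2 / R ^ 2 * (M - t)) (𝓝[<] M) (𝓝 0) :=
    ((by fun_prop : Continuous fun t => 2 / R ^ 2 * (M - t)).tendsto' M 0 (by simp)).mono_left
      nhdsWithin_le_nhds
  have hlim : Tendsto ξ (𝓝[<] M) (𝓝[s] 0) := by
    refine tendsto_nhdsWithin_iff.2 ⟨squeeze_zero_norm' ?_ (by simpa using hbound.sqrt),
      hψ.mono fun t h => h.2.1⟩
    filter_upwards [hξ_sq] with t ht
    rw [Real.norm_eq_abs, ← Real.sqrt_sq_eq_abs]
    exact Real.sqrt_le_sqrt ht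
  have hξ4 : (fun t => ξ t ^ 4) =O[𝓝[<] M] fun t => (M - t) ^ 2 := by
    refine .of_bound ((2 / R ^ 2) ^ 2) ?_
    filter_upwards [hξ_sq] with t ht
    rw [Real.norm_eq_abs, Real.norm_eq_abs, abs_sq, show ξ t ^ 4 = (ξ t ^ 2) ^ 2 by ring,
      abs_sq, ← mul_pow]
    exact pow_le_pow_left₀ (sq_nonneg _) ht 2
  refine ((((isBigO_wRoot_sq_sub_expansion hn hσ).comp_tendsto hlim).trans hξ4).const_mul_left
    (R ^ 2)).congr' ?_ .rfl
  filter_upwards [hscale] with t ⟨hξ, hr, hv⟩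
  rw [hv, hr, div_pow_pred_eq_wRoot (by omega) hR.ne' (by linarith),
    Real.sqrt_mul (sq_nonneg R), Real.sqrt_sq hR.le]
  simp only [Function.comp_apply]
  field_simp

end ModelProfile

theorem WR_expansion_general (n : ℕ) (hn : 3 ≤ n) (R : ℝ)
    (hR0 : 0 < R) (hRmax : R < Real.sqrt (((n : ℝ) - 2) / n))
    (r₁ r₂ : ℝ) (hr₁0 : 0 < r₁)
    (ψm ψp : ℝ → ℝ)
    (hψm : ∀ t ∈ Icc (0 : ℝ) ((1 - n * R ^ 2 / ((n : ℝ) - 2)) / 2),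
      ψm t ∈ Icc r₁ R ∧
        (1 - (ψm t) ^ 2) / 2 - R ^ n / (((n : ℝ) - 2) * (ψm t) ^ (n - 2)) = t)
    (hψp : ∀ t ∈ Icc (0 : ℝ) ((1 - n * R ^ 2 / ((n : ℝ) - 2)) / 2),
      ψp t ∈ Icc R r₂ ∧
        (1 - (ψp t) ^ 2) / 2 - R ^ n / (((n : ℝ) - 2) * (ψp t) ^ (n - 2)) = t) :
    (∃ C δ : ℝ, 0 < δ ∧ ∀ t : ℝ,
      (1 - n * R ^ 2 / ((n : ℝ) - 2)) / 2 - δ < t →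
      t < (1 - n * R ^ 2 / ((n : ℝ) - 2)) / 2 →
      |(((ψp t) ^ n - R ^ n) / (ψp t) ^ (n - 1)) ^ 2
          - (2 * n * ((1 - n * R ^ 2 / ((n : ℝ) - 2)) / 2 - t)
            - (4 * ((n : ℝ) - 1) * Real.sqrt (2 * n) / (3 * R))
              * ((1 - n * R ^ 2 / ((n : ℝ) - 2)) / 2 - t)
              * Real.sqrt ((1 - n * R ^ 2 / ((n : ℝ) - 2)) / 2 - t))|
        ≤ C * ((1 - n * R ^ 2 / ((n : ℝ) - 2)) / 2 - t) ^ 2) ∧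
    (∃ C δ : ℝ, 0 < δ ∧ ∀ t : ℝ,
      (1 - n * R ^ 2 / ((n : ℝ) - 2)) / 2 - δ < t →
      t < (1 - n * R ^ 2 / ((n : ℝ) - 2)) / 2 →
      |(((ψm t) ^ n - R ^ n) / (ψm t) ^ (n - 1)) ^ 2
          - (2 * n * ((1 - n * R ^ 2 / ((n : ℝ) - 2)) / 2 - t)
            + (4 * ((n : ℝ) - 1) * Real.sqrt (2 * n) / (3 * R))
              * ((1 - n * R ^ 2 / ((n : ℝ) - 2)) / 2 - t)
              * Real.sqrt ((1 - n * R ^ 2 / ((n : ℝ) - 2)) / 2 - t))|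
        ≤ C * ((1 - n * R ^ 2 / ((n : ℝ) - 2)) / 2 - t) ^ 2) ∧
    Tendsto (fun t : ℝ =>
        (((ψp t) ^ n - R ^ n) / (ψp t) ^ (n - 1)) ^ 2
          / ((1 - n * R ^ 2 / ((n : ℝ) - 2)) / 2 - t))
      (𝓝[<] ((1 - n * R ^ 2 / ((n : ℝ) - 2)) / 2)) (𝓝 (2 * (n : ℝ))) ∧
    Tendsto (fun t : ℝ =>
        (((ψm t) ^ n - R ^ n) / (ψm t) ^ (n - 1)) ^ 2
          / ((1 - n * R ^ 2 / ((n : ℝ) - 2)) / 2 - t))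
      (𝓝[<] ((1 - n * R ^ 2 / ((n : ℝ) - 2)) / 2)) (𝓝 (2 * (n : ℝ))) := by
  open ModelProfile in
  rw [← profile_self hn hR0.ne'] at hψm hψp ⊢
  have hIcc : ∀ᶠ t in 𝓝[<] profile n R R, t ∈ Icc 0 (profile n R R) :=
    mem_of_superset (Ioo_mem_nhdsLT (zero_lt_profile_self hn hR0 hRmax)) Ioo_subset_Icc_self
  have hp := isBigO_branch_sub_expansion hn hR0 (s := Ici 0) (σ := 1)
    (fun x hx => by rw [one_mul, abs_of_nonneg hx])
    (hIcc.mono fun t ht => ⟨hR0.trans_le (hψp t ht).1.1,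
      sub_nonneg.2 ((one_le_div hR0).2 (hψp t ht).1.1), (hψp t ht).2⟩)
  have hm := isBigO_branch_sub_expansion hn hR0 (s := Iic 0) (σ := -1)
    (fun x hx => by rw [abs_of_nonpos hx]; ring)
    (hIcc.mono fun t ht => ⟨hr₁0.trans_le (hψm t ht).1.1,
      sub_nonpos.2 ((div_le_one hR0).2 (hψm t ht).1.2), (hψm t ht).2⟩)
  refine ⟨?_, ?_, tendsto_div_of_isBigO_sub hp, tendsto_div_of_isBigO_sub hm⟩
  · simpa only [one_mul, abs_sq] using exists_bound_of_isBigO_nhdsLT hp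
  · simpa only [neg_one_mul, neg_mul, sub_neg_eq_add, one_mul, abs_sq] using
      exists_bound_of_isBigO_nhdsLT hm

/-- expansion of `W_R = ((Ψⁿ - Rⁿ)/Ψ^{n-1})²` near the maximum:
`W_R = 2n(u_max - u) ∓ (4(n-1)√(2n)/(3R))(u_max - u)^{3/2} + O((u_max - u)²)`,
with the minus sign for `Ψ = ψ₊` and the plus sign for `Ψ = ψ₋`; in particular
`W_R/(u_max - u) → 2n`. Here `t` plays the role of the value `u`. -/
theorem WR_expansion (n : ℕ) (hn : 3 ≤ n) (R : ℝ)
    (hR0 : 0 < R) (hRmax : R < Real.sqrt (((n : ℝ) - 2) / n))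
    (r₁ r₂ : ℝ) (hr₁0 : 0 < r₁) (hr₁R : r₁ < R) (hRr₂ : R < r₂)
    (hz₁ : 1 - r₁ ^ 2 - 2 * R ^ n / (((n : ℝ) - 2) * r₁ ^ (n - 2)) = 0)
    (hz₂ : 1 - r₂ ^ 2 - 2 * R ^ n / (((n : ℝ) - 2) * r₂ ^ (n - 2)) = 0)
    (ψm ψp : ℝ → ℝ)
    (hψm : ∀ t ∈ Icc (0 : ℝ) ((1 - n * R ^ 2 / ((n : ℝ) - 2)) / 2),
      ψm t ∈ Icc r₁ R ∧
        (1 - (ψm t) ^ 2) / 2 - R ^ n / (((n : ℝ) - 2) * (ψm t) ^ (n - 2)) = t)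
    (hψp : ∀ t ∈ Icc (0 : ℝ) ((1 - n * R ^ 2 / ((n : ℝ) - 2)) / 2),
      ψp t ∈ Icc R r₂ ∧
        (1 - (ψp t) ^ 2) / 2 - R ^ n / (((n : ℝ) - 2) * (ψp t) ^ (n - 2)) = t) :
    (∃ C δ : ℝ, 0 < δ ∧ ∀ t : ℝ,
      (1 - n * R ^ 2 / ((n : ℝ) - 2)) / 2 - δ < t →
      t < (1 - n * R ^ 2 / ((n : ℝ) - 2)) / 2 →
      |(((ψp t) ^ n - R ^ n) / (ψp t) ^ (n - 1)) ^ 2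
          - (2 * n * ((1 - n * R ^ 2 / ((n : ℝ) - 2)) / 2 - t)
            - (4 * ((n : ℝ) - 1) * Real.sqrt (2 * n) / (3 * R))
              * ((1 - n * R ^ 2 / ((n : ℝ) - 2)) / 2 - t)
              * Real.sqrt ((1 - n * R ^ 2 / ((n : ℝ) - 2)) / 2 - t))|
        ≤ C * ((1 - n * R ^ 2 / ((n : ℝ) - 2)) / 2 - t) ^ 2) ∧
    (∃ C δ : ℝ, 0 < δ ∧ ∀ t : ℝ,
      (1 - n * R ^ 2 / ((n : ℝ) - 2)) / 2 - δ < t →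
      t < (1 - n * R ^ 2 / ((n : ℝ) - 2)) / 2 →
      |(((ψm t) ^ n - R ^ n) / (ψm t) ^ (n - 1)) ^ 2
          - (2 * n * ((1 - n * R ^ 2 / ((n : ℝ) - 2)) / 2 - t)
            + (4 * ((n : ℝ) - 1) * Real.sqrt (2 * n) / (3 * R))
              * ((1 - n * R ^ 2 / ((n : ℝ) - 2)) / 2 - t)
              * Real.sqrt ((1 - n * R ^ 2 / ((n : ℝ) - 2)) / 2 - t))|
        ≤ C * ((1 - n * R ^ 2 / ((n : ℝ) - 2)) / 2 - t) ^ 2) ∧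
    Tendsto (fun t : ℝ =>
        (((ψp t) ^ n - R ^ n) / (ψp t) ^ (n - 1)) ^ 2
          / ((1 - n * R ^ 2 / ((n : ℝ) - 2)) / 2 - t))
      (𝓝[<] ((1 - n * R ^ 2 / ((n : ℝ) - 2)) / 2)) (𝓝 (2 * (n : ℝ))) ∧
    Tendsto (fun t : ℝ =>
        (((ψm t) ^ n - R ^ n) / (ψm t) ^ (n - 1)) ^ 2
          / ((1 - n * R ^ 2 / ((n : ℝ) - 2)) / 2 - t))
      (𝓝[<] ((1 - n * R ^ 2 / ((n : ℝ) - 2)) / 2)) (𝓝 (2 * (n : ℝ))) :=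
  WR_expansion_general n hn R hR0 hRmax r₁ r₂ hr₁0 ψm ψp hψm hψp
end

section
/- Every closed (compact, boundaryless) smooth hypersurface in ℝⁿ has at least one point where the mean curvature with respect to the outward normal is positive. Consequently, if the top stratum Σ of MAX(u) is a closed hypersurface satisfying H ≤ -(n-1)/R everywhere for some R > 0, a contradiction arises, so the case τ(u,Ω₁) < √n is impossible in the setting of Theorem 5.1. -/
/-! Let `p` be a point of the compact region `{f ≤ 0}` farthest from the origin and `r = ‖p‖`.
Then `f ≥ 0` outside the open ball of radius `r`, so `p` lies on `Σ = {f = 0}` and minimises `f`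
on `{‖x‖ ≥ r}`. First-order conditions give `∇f(p) = c p` with `c > 0`, and restricting `f` to
the great circles through `p` of the sphere of radius `r` shows that the Hessian `A` of `f` at `p`
is at least `c` on unit tangent vectors. The mean curvature of a level set is
`H = |∇f|⁻¹ (tr A - ⟪ν, A ν⟫)`, the trace of `A` over the tangent space divided by `|∇f|`, hence
`H(p) ≥ (n - 1) c / |∇f(p)| > 0`. -/

open Set

noncomputable section

open Filter Topology Metric
open scoped RealInnerProductSpace

theorem IsLocalMin.hasDerivAt_deriv_nonneg {φ ψ : ℝ → ℝ} {a d : ℝ} (h : IsLocalMin φ a)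
    (hφ : ∀ᶠ t in 𝓝 a, HasDerivAt φ (ψ t) t) (hψ : HasDerivAt ψ d a) : 0 ≤ d := by
  have hderiv : deriv φ =ᶠ[𝓝 a] ψ := hφ.mono fun t ht => ht.deriv
  by_contra! hd
  -- By the second-derivative test `a` is also a local maximum, so `φ` is locally constant.
  have hmax : IsLocalMax φ a :=
    isLocalMax_of_deriv_deriv_neg (by rwa [hderiv.deriv_eq, hψ.deriv])
      (by rw [hderiv.eq_of_nhds]; exact h.hasDerivAt_eq_zero hφ.self_of_nhds)
      hφ.self_of_nhds.continuousAt
  have hconst : φ =ᶠ[𝓝 a] fun _ => φ a := (h.and hmax).mono fun t ht => le_antisymm ht.2 ht.1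
  have hψ0 : ψ =ᶠ[𝓝 a] fun _ => 0 := by
    filter_upwards [hderiv.symm, hconst.deriv] with t h₁ h₂
    rw [h₁, h₂, deriv_const]
  exact hd.ne (hψ.congr_of_eventuallyEq hψ0.symm |>.unique (hasDerivAt_const a 0))

theorem compl_ball_subset_setOf_nonneg {E : Type*} [NormedAddCommGroup E] [NormedSpace ℝ E]
    {f : E → ℝ} {r : ℝ} (hf : Continuous f) (hr : r ≠ 0)
    (hK : {x | f x ≤ 0} ⊆ closedBall 0 r) : (ball (0 : E) r)ᶜ ⊆ {x | 0 ≤ f x} := by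
  rw [← interior_closedBall 0 hr, ← closure_compl]
  refine closure_minimal (fun x hx => ?_) (isClosed_le continuous_const hf)
  by_contra h
  exact hx (hK (show f x ≤ 0 from (not_le.mp h).le))

theorem IsMaxOn.isMinOn_setOf_norm_le {E : Type*} [NormedAddCommGroup E] [NormedSpace ℝ E]
    {f : E → ℝ} {p : E} (hp : IsMaxOn norm {x | f x ≤ 0} p) (hf : Continuous f)
    (hpK : f p ≤ 0) (hp0 : p ≠ 0) : f p = 0 ∧ IsMinOn f {x | ‖p‖ ≤ ‖x‖} p := by
  have hext := compl_ball_subset_setOf_nonneg hf (norm_ne_zero_iff.mpr hp0)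
    fun x hx => mem_closedBall_zero_iff.mpr (hp hx)
  have hfp : f p = 0 := le_antisymm hpK (hext (by simp))
  exact ⟨hfp, fun x hx => hfp ▸ hext (by simpa using hx)⟩

section InnerProductSpace

variable {E : Type*} [NormedAddCommGroup E] [InnerProductSpace ℝ E]

theorem mem_posTangentConeAt_setOf_norm_le_norm {p w : E} (hw : 0 ≤ ⟪p, w⟫) :
    w ∈ posTangentConeAt {x | ‖p‖ ≤ ‖x‖} p := by
  refine mem_posTangentConeAt_of_frequently_mem (Eventually.frequently ?_)
  filter_upwards [self_mem_nhdsWithin] with t (ht : 0 < t)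
  have : ‖p‖ ^ 2 ≤ ‖p + t • w‖ ^ 2 := by
    rw [norm_add_sq_real, real_inner_smul_right]
    nlinarith [sq_nonneg ‖t • w‖]
  exact (pow_le_pow_iff_left₀ (norm_nonneg _) (norm_nonneg _) two_ne_zero).mp this

theorem exists_nonneg_smul_eq_of_inner_nonneg [FiniteDimensional ℝ E] {p g : E} (hp : p ≠ 0)
    (h : ∀ w, 0 ≤ ⟪p, w⟫ → 0 ≤ ⟪g, w⟫) : ∃ c : ℝ, 0 ≤ c ∧ g = c • p := by
  have hg : g ∈ (ℝ ∙ p)ᗮᗮ := by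
    refine (Submodule.mem_orthogonal _ _).mpr fun w hw => ?_
    rw [Submodule.mem_orthogonal_singleton_iff_inner_right] at hw
    have h₁ := h w hw.ge
    have h₂ := h (-w) (by rw [inner_neg_right, hw, neg_zero])
    rw [inner_neg_right] at h₂
    rw [real_inner_comm]
    linarith
  rw [Submodule.orthogonal_orthogonal, Submodule.mem_span_singleton] at hg
  obtain ⟨c, rfl⟩ := hg
  refine ⟨c, ?_, rfl⟩
  have := h p real_inner_self_nonneg
  rw [real_inner_smul_left, real_inner_self_eq_norm_sq] at this
  exact nonneg_of_mul_nonneg_left this (by positivity)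

section Gradient

variable [CompleteSpace E] {f : E → ℝ} {p : E}

theorem exists_ne_zero_nonpos_of_gradient_ne_zero {z : E} (hz : f z = 0)
    (hgz : gradient f z ≠ 0) : ∃ x, f x ≤ 0 ∧ x ≠ 0 := by
  by_contra! h
  have hmin : IsLocalMin f z := Eventually.of_forall fun x => by
    rcases le_or_gt (f x) 0 with hx | hx
    · rw [h x hx, ← h z hz.le]
    · exact hz ▸ hx.le
  exact hgz (by simp [gradient, hmin.fderiv_eq_zero])

theorem IsCompact.exists_ne_zero_isMinOn_setOf_norm_le (hK : IsCompact {x | f x ≤ 0})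
    (hf : Continuous f) {z : E} (hz : f z = 0) (hgz : gradient f z ≠ 0) :
    ∃ p, p ≠ 0 ∧ f p = 0 ∧ IsMinOn f {x | ‖p‖ ≤ ‖x‖} p := by
  obtain ⟨x₀, hx₀K, hx₀⟩ := exists_ne_zero_nonpos_of_gradient_ne_zero hz hgz
  obtain ⟨p, hpK, hpmax⟩ := hK.exists_isMaxOn ⟨x₀, hx₀K⟩ continuous_norm.continuousOn
  have hp : p ≠ 0 := norm_pos_iff.mp ((norm_pos_iff.mpr hx₀).trans_le (hpmax hx₀K))
  exact ⟨p, hp, hpmax.isMinOn_setOf_norm_le hf hpK hp⟩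

theorem IsMinOn.exists_gradient_eq_nonneg_smul [FiniteDimensional ℝ E]
    (h : IsMinOn f {x | ‖p‖ ≤ ‖x‖} p) (hf : DifferentiableAt ℝ f p) (hp : p ≠ 0) :
    ∃ c : ℝ, 0 ≤ c ∧ gradient f p = c • p := by
  refine exists_nonneg_smul_eq_of_inner_nonneg hp fun w hw => ?_
  simpa using h.localize.hasFDerivWithinAt_nonneg
    hf.hasGradientAt.hasFDerivAt.hasFDerivWithinAt (mem_posTangentConeAt_setOf_norm_le_norm hw)

theorem IsMinOn.inner_gradient_le_inner_hasFDerivAt_gradient {A : E →L[ℝ] E} {w : E}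
    (h : IsMinOn f (sphere 0 ‖p‖) p) (hf : Differentiable ℝ f)
    (hA : HasFDerivAt (gradient f) A p) (hw : ⟪p, w⟫ = 0) (hwp : ‖w‖ = ‖p‖) :
    ⟪gradient f p, p⟫ ≤ ⟪w, A w⟫ := by
  set γ : ℝ → E := fun t => Real.cos t • p + Real.sin t • w
  set γ' : ℝ → E := fun t => -Real.sin t • p + Real.cos t • w
  have hγ : ∀ t, HasDerivAt γ (γ' t) t := fun t =>
    ((Real.hasDerivAt_cos t).smul_const p).add ((Real.hasDerivAt_sin t).smul_const w)
  have hγ' : HasDerivAt γ' (-p) 0 := by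
    convert ((Real.hasDerivAt_sin 0).neg.smul_const p).add
      ((Real.hasDerivAt_cos 0).smul_const w) using 1
    · funext t
      simp [γ']
    · simp
  have hγ0 : γ 0 = p := by simp [γ]
  have hγ'0 : γ' 0 = w := by simp [γ']
  have hγ_mem : ∀ t, γ t ∈ sphere (0 : E) ‖p‖ := by
    intro t
    rw [mem_sphere_zero_iff_norm, ← sq_eq_sq₀ (norm_nonneg _) (norm_nonneg _), norm_add_sq_real,
      norm_smul, norm_smul, real_inner_smul_left, real_inner_smul_right, hw, hwp,
      Real.norm_eq_abs, Real.norm_eq_abs, mul_pow, mul_pow, sq_abs, sq_abs]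
    linear_combination ‖p‖ ^ 2 * Real.sin_sq_add_cos_sq t
  have hmin : IsLocalMin (f ∘ γ) 0 :=
    Eventually.of_forall fun t => by simpa [hγ0] using h (hγ_mem t)
  have hφ : ∀ t, HasDerivAt (f ∘ γ) ⟪gradient f (γ t), γ' t⟫ t := fun t => by
    simpa using (hf (γ t)).hasGradientAt.hasFDerivAt.comp_hasDerivAt t (hγ t)
  have hψ : HasDerivAt (fun t => ⟪gradient f (γ t), γ' t⟫) (⟪gradient f p, -p⟫ + ⟪A w, w⟫) 0 := by
    have := (hγ0 ▸ hA).comp_hasDerivAt 0 (hγ 0)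
    rw [hγ'0] at this
    simpa [hγ0, hγ'0] using this.inner ℝ hγ'
  have := hmin.hasDerivAt_deriv_nonneg (Eventually.of_forall hφ) hψ
  rw [inner_neg_right, real_inner_comm w (A w)] at this
  linarith

end Gradient

theorem HasFDerivAt.inv_norm_smul {F : Type*} [NormedAddCommGroup F] [NormedSpace ℝ F]
    {G : F → E} {A : F →L[ℝ] E} {x : F} (hG : HasFDerivAt G A x) (hx : G x ≠ 0) :
    HasFDerivAt (fun y => ‖G y‖⁻¹ • G y)
      (‖G x‖⁻¹ • (A - ((innerSL ℝ (‖G x‖⁻¹ • G x)).comp A).smulRight (‖G x‖⁻¹ • G x))) x := by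
  have hm : ‖G x‖ ≠ 0 := norm_ne_zero_iff.mpr hx
  have hnorm : HasFDerivAt (fun y => ‖G y‖) (‖G x‖⁻¹ • (innerSL ℝ (G x)).comp A) x := by
    convert hG.norm_sq.sqrt (pow_ne_zero 2 hm) using 1
    · funext y
      exact (Real.sqrt_sq (norm_nonneg _)).symm
    · ext v
      simp [Real.sqrt_sq (norm_nonneg _)]
      field_simp
  refine (((hasFDerivAt_inv hm).comp x hnorm).smul hG).congr_fderiv ?_
  ext v
  simp
  module

theorem le_trace_sub_smulRight_innerSL_comp [FiniteDimensional ℝ E] (A : E →L[ℝ] E) {u : E}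
    (hu : ‖u‖ = 1) {c : ℝ} (hA : ∀ e, ⟪u, e⟫ = 0 → ‖e‖ = 1 → c ≤ ⟪e, A e⟫) :
    ((Module.finrank ℝ E : ℝ) - 1) * c ≤
      LinearMap.trace ℝ E (A - ((innerSL ℝ u).comp A).smulRight u : E →L[ℝ] E) := by
  classical
  have hu' : Orthonormal ℝ ((↑) : ({u} : Set E) → E) :=
    orthonormal_subsingleton_iff.mpr fun e => by rw [e.2, hu]
  obtain ⟨s, b, hsub, hb⟩ := hu'.exists_orthonormalBasis_extension
  have hus : u ∈ s := hsub rfl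
  have hs : Module.finrank ℝ E = s.card := Module.finrank_eq_card_finset_basis b.toBasis
  have horth : Orthonormal ℝ ((↑) : s → E) := hb ▸ b.orthonormal
  rw [LinearMap.trace_eq_sum_inner _ b, hb]
  simp only [ContinuousLinearMap.coe_coe, FunLike.coe_sub, Pi.sub_apply,
    ContinuousLinearMap.smulRight_apply, ContinuousLinearMap.comp_apply, innerSL_apply_apply,
    inner_sub_right, real_inner_smul_right]
  rw [Finset.sum_coe_sort s (fun e => ⟪e, A e⟫ - ⟪u, A e⟫ * ⟪e, u⟫),
    ← Finset.add_sum_erase s _ hus, real_inner_self_eq_norm_sq, hu]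
  have hterm : ∀ e ∈ s.erase u, c ≤ ⟪e, A e⟫ - ⟪u, A e⟫ * ⟪e, u⟫ := by
    intro e he
    have heu : ⟪e, u⟫ = 0 :=
      horth.inner_eq_zero (i := ⟨e, Finset.mem_of_mem_erase he⟩) (j := ⟨u, hus⟩)
        (by simpa using Finset.ne_of_mem_erase he)
    rw [heu, mul_zero, sub_zero]
    exact hA e (by rw [real_inner_comm, heu]) (horth.norm_eq_one ⟨e, Finset.mem_of_mem_erase he⟩)
  have := Finset.card_nsmul_le_sum _ _ _ hterm
  rw [Finset.card_erase_of_mem hus, nsmul_eq_mul, Nat.cast_sub (Finset.card_pos.mpr ⟨u, hus⟩),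
    ← hs] at this
  simpa using this

end InnerProductSpace

theorem divg_eq_trace {n : ℕ} {X : EuclideanSpace ℝ (Fin n) → EuclideanSpace ℝ (Fin n)}
    {D : EuclideanSpace ℝ (Fin n) →L[ℝ] EuclideanSpace ℝ (Fin n)} {x : EuclideanSpace ℝ (Fin n)}
    (hX : HasFDerivAt X D x) :
    divg X x = LinearMap.trace ℝ _ (D : EuclideanSpace ℝ (Fin n) →ₗ[ℝ] EuclideanSpace ℝ (Fin n)) := by
  rw [LinearMap.trace_eq_sum_inner _ (EuclideanSpace.basisFun (Fin n) ℝ), divg]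
  refine Finset.sum_congr rfl fun i _ => ?_
  have hXi : HasFDerivAt (fun y => X y i) ((EuclideanSpace.proj i).comp D) x :=
    (EuclideanSpace.proj (𝕜 := ℝ) i).hasFDerivAt.comp x hX
  rw [hXi.fderiv]
  simp [EuclideanSpace.inner_single_left]

theorem mul_div_norm_le_divg_inv_norm_smul {n : ℕ}
    {G : EuclideanSpace ℝ (Fin n) → EuclideanSpace ℝ (Fin n)}
    {A : EuclideanSpace ℝ (Fin n) →L[ℝ] EuclideanSpace ℝ (Fin n)} {x : EuclideanSpace ℝ (Fin n)}
    {c : ℝ} (hG : HasFDerivAt G A x) (hx : G x ≠ 0)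
    (hA : ∀ e, ⟪G x, e⟫ = 0 → ‖e‖ = 1 → c ≤ ⟪e, A e⟫) :
    ((n : ℝ) - 1) * c / ‖G x‖ ≤ divg (fun y => ‖G y‖⁻¹ • G y) x := by
  rw [divg_eq_trace (hG.inv_norm_smul hx), ContinuousLinearMap.toLinearMap_smul, map_smul, smul_eq_mul,
    div_eq_inv_mul]
  refine mul_le_mul_of_nonneg_left ?_ (inv_nonneg.mpr (norm_nonneg _))
  have hm : ‖G x‖⁻¹ ≠ 0 := inv_ne_zero (norm_ne_zero_iff.mpr hx)
  have := le_trace_sub_smulRight_innerSL_comp A (norm_smul_inv_norm hx) fun e he he₁ =>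
    hA e ((mul_eq_zero.mp (real_inner_smul_left (G x) e _ ▸ he)).resolve_left hm) he₁
  rwa [finrank_euclideanSpace_fin] at this

theorem exists_pos_divg_normalized_gradient {n : ℕ} (hn : 2 ≤ n)
    {f : EuclideanSpace ℝ (Fin n) → ℝ} (hf : ContDiff ℝ 2 f) (hK : IsCompact {x | f x ≤ 0})
    (hne : {x | f x = 0}.Nonempty) (hreg : ∀ x, f x = 0 → gradient f x ≠ 0) :
    ∃ p, f p = 0 ∧ 0 < divg (fun y => ‖gradient f y‖⁻¹ • gradient f y) p := by
  obtain ⟨z, hz⟩ := hne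
  obtain ⟨p, hp, hfp, hmin⟩ :=
    hK.exists_ne_zero_isMinOn_setOf_norm_le hf.continuous hz (hreg z hz)
  have hfd : Differentiable ℝ f := hf.differentiable (by norm_num)
  have hgrad_diff : Differentiable ℝ (gradient f) :=
    ((InnerProductSpace.toDual ℝ _).symm.contDiff.comp
      (hf.fderiv_right (m := 1) (by norm_num))).differentiable one_ne_zero
  set A := fderiv ℝ (gradient f) p
  have hA : HasFDerivAt (gradient f) A p := (hgrad_diff p).hasFDerivAt
  obtain ⟨c, hc₀, hgrad⟩ := hmin.exists_gradient_eq_nonneg_smul (hfd p) hp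
  have hc : 0 < c := hc₀.lt_of_ne (by rintro rfl; exact hreg p hfp (by simp [hgrad]))
  have hhess : ∀ e, ⟪gradient f p, e⟫ = 0 → ‖e‖ = 1 → c ≤ ⟪e, A e⟫ := by
    intro e he he₁
    rw [hgrad, real_inner_smul_left, mul_eq_zero] at he
    have := (hmin.on_subset fun x hx => (mem_sphere_zero_iff_norm.mp hx).ge)
      |>.inner_gradient_le_inner_hasFDerivAt_gradient hfd hA (w := ‖p‖ • e)
        (by rw [real_inner_smul_right, he.resolve_left hc.ne', mul_zero])
        (by rw [norm_smul, norm_norm, he₁, mul_one])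
    rw [hgrad, map_smul, real_inner_smul_left, real_inner_self_eq_norm_sq, real_inner_smul_left,
      real_inner_smul_right] at this
    exact le_of_mul_le_mul_right (by linarith) (by positivity : 0 < ‖p‖ ^ 2)
  refine ⟨p, hfp, lt_of_lt_of_le ?_ (mul_div_norm_le_divg_inv_norm_smul hA (hreg p hfp) hhess)⟩
  have : (2 : ℝ) ≤ n := by exact_mod_cast hn
  have : 0 < (n : ℝ) - 1 := by linarith
  exact div_pos (mul_pos this hc) (norm_pos_iff.mpr (hreg p hfp))

/-- every closed smooth hypersurface in `ℝⁿ` (here realized as a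
compact regular level set `Σ = {f = 0}` bounding the compact region `{f ≤ 0}`)
has a point where the mean curvature `H = div(∇f/|∇f|)` with respect to the
outward normal `ν = ∇f/|∇f|` is positive; consequently it is impossible that
`H ≤ -(n-1)/R` everywhere on `Σ` for some `R > 0`. -/
theorem closed_hypersurface_positive_mean_curvature (n : ℕ) (hn : 2 ≤ n)
    (f : EuclideanSpace ℝ (Fin n) → ℝ) (hf : ContDiff ℝ 2 f)
    (hK : IsCompact {x | f x ≤ 0})
    (hne : {x : EuclideanSpace ℝ (Fin n) | f x = 0}.Nonempty)
    (hreg : ∀ x, f x = 0 → gradient f x ≠ 0) :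
    (∃ p, f p = 0 ∧
      0 < divg (fun y => ‖gradient f y‖⁻¹ • gradient f y) p) ∧
    ∀ R : ℝ, 0 < R →
      ¬ (∀ x, f x = 0 →
        divg (fun y => ‖gradient f y‖⁻¹ • gradient f y) x ≤ -((n : ℝ) - 1) / R) := by
  have hpos := exists_pos_divg_normalized_gradient hn hf hK hne hreg
  refine ⟨hpos, fun R hR hall => ?_⟩
  obtain ⟨p, hp, hHp⟩ := hpos
  have : (2 : ℝ) ≤ n := by exact_mod_cast hn
  have : -((n : ℝ) - 1) / R < 0 := div_neg_of_neg_of_pos (by linarith) hR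
  linarith [hall p hp]
end
end

section
/- If (Ω,u) solves Δu = -n, u = 0 on ∂Ω, on a ring-shaped domain, the maximum set MAX(u) is a closed hypersurface Σ that is a round sphere of radius R, and u is rotationally symmetric near Σ, then (Ω,u) coincides globally with the ring-shaped model solution (Ω_R, u_R), by real-analyticity of u. -/
noncomputable section

section

variable {E : Type*} [NormedAddCommGroup E] [InnerProductSpace ℝ E]

theorem analyticAt_inner_self (x : E) : AnalyticAt ℝ (fun y : E => inner ℝ y y) x :=
  ((innerSL ℝ).analyticAt_bilinear (x, x)).comp₂ analyticAt_id analyticAt_id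

theorem analyticAt_norm {x : E} (hx : x ≠ 0) : AnalyticAt ℝ (fun y : E => ‖y‖) x := by
  have hpos : 0 < inner ℝ x x := real_inner_self_pos.mpr hx
  have hexp : AnalyticAt ℝ (fun y : E => Real.exp (Real.log (inner ℝ y y) / 2)) x :=
    (((analyticAt_log hpos).comp (f := fun y : E => inner ℝ y y)
      (analyticAt_inner_self x)).div_const).rexp
  refine hexp.congr ?_
  filter_upwards [isOpen_compl_singleton.mem_nhds hx] with y hy
  rw [real_inner_self_eq_norm_sq, Real.log_pow, Nat.cast_ofNat,
    mul_div_cancel_left₀ _ two_ne_zero, Real.exp_log (norm_pos_iff.mpr hy)]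

def ringModel (n : ℕ) (R c : ℝ) (x : E) : ℝ :=
  (1 - ‖x‖ ^ 2) / 2 - R ^ n / (((n : ℝ) - 2) * ‖x‖ ^ (n - 2)) + c

theorem analyticOnNhd_ringModel (n : ℕ) (R c : ℝ) :
    AnalyticOnNhd ℝ (ringModel (E := E) n R c) {0}ᶜ := by
  intro x hx
  have hnorm := analyticAt_norm hx
  have hpow : ‖x‖ ^ (n - 2) ≠ 0 := pow_ne_zero _ (norm_ne_zero_iff.mpr hx)
  unfold ringModel
  simp only [div_mul_eq_div_div]
  exact (((analyticAt_const.sub (hnorm.pow 2)).div_const).sub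
    (analyticAt_const.div (hnorm.pow (n - 2)) hpow)).add analyticAt_const

end

theorem analytic_rigidity_ring_model_general (n : ℕ) (R : ℝ)
    (Ω : Set (EuclideanSpace ℝ (Fin n)))
    (hΩconn : IsConnected Ω)
    (h0 : (0 : EuclideanSpace ℝ (Fin n)) ∉ Ω)
    (u : EuclideanSpace ℝ (Fin n) → ℝ)
    (hu : AnalyticOnNhd ℝ u Ω)
    (c : ℝ) (V : Set (EuclideanSpace ℝ (Fin n)))
    (hVopen : IsOpen V) (hVne : V.Nonempty) (hVΩ : V ⊆ Ω)
    (hagree : ∀ x ∈ V,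
      u x = (1 - ‖x‖ ^ 2) / 2 - R ^ n / (((n : ℝ) - 2) * ‖x‖ ^ (n - 2)) + c) :
    ∀ x ∈ Ω,
      u x = (1 - ‖x‖ ^ 2) / 2 - R ^ n / (((n : ℝ) - 2) * ‖x‖ ^ (n - 2)) + c := by
  obtain ⟨z, hz⟩ := hVne
  have hΩ : Ω ⊆ {0}ᶜ := fun x hx hx0 => h0 (hx0 ▸ hx)
  exact hu.eqOn_of_preconnected_of_eventuallyEq ((analyticOnNhd_ringModel n R c).mono hΩ)
    hΩconn.isPreconnected (hVΩ hz) (Filter.eventuallyEq_of_mem (hVopen.mem_nhds hz) hagree)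

/-- if a real-analytic solution `u` of `Δu = -n` on a connected
domain `Ω` (avoiding the origin) agrees with the ring-shaped model
`u_R(x) = (1-|x|²)/2 - Rⁿ/((n-2)|x|^{n-2}) + c` on a nonempty open subset of
`Ω`, then it agrees with it on all of `Ω`, by real-analyticity. -/
theorem analytic_rigidity_ring_model (n : ℕ) (hn : 3 ≤ n) (R : ℝ)
    (hR0 : 0 < R) (hRmax : R < Real.sqrt (((n : ℝ) - 2) / n))
    (Ω : Set (EuclideanSpace ℝ (Fin n)))
    (hΩopen : IsOpen Ω) (hΩconn : IsConnected Ω) (hΩbdd : Bornology.IsBounded Ω)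
    (h0 : (0 : EuclideanSpace ℝ (Fin n)) ∉ Ω)
    (u : EuclideanSpace ℝ (Fin n) → ℝ)
    (hu : AnalyticOnNhd ℝ u Ω)
    (hlap : ∀ x ∈ Ω, lap u x = -n)
    (c : ℝ) (V : Set (EuclideanSpace ℝ (Fin n)))
    (hVopen : IsOpen V) (hVne : V.Nonempty) (hVΩ : V ⊆ Ω)
    (hagree : ∀ x ∈ V,
      u x = (1 - ‖x‖ ^ 2) / 2 - R ^ n / (((n : ℝ) - 2) * ‖x‖ ^ (n - 2)) + c) :
    ∀ x ∈ Ω,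
      u x = (1 - ‖x‖ ^ 2) / 2 - R ^ n / (((n : ℝ) - 2) * ‖x‖ ^ (n - 2)) + c :=
  analytic_rigidity_ring_model_general n R Ω hΩconn h0 u hu c V hVopen hVne hVΩ hagree
end
end
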